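/- arXiv:1902.02603 — 8 statements merged into one kernel-verified Lean document; each statement's English description precedes it below -/
import Mathlib

section
/- Let ν ≥ 0 be a real number and z > 0. Then z/(ν − 1/2 + √((ν + 1/2)² + z²)) < I_ν(z)/I_{ν−1}(z) < z/(ν − 1 + √((ν + 1)² + z²)). -/
/-- The modified Bessel function of the first kind of order `ν`, defined for `z > 0` by
`I_ν(z) = ∑_{k=0}^∞ (1/(k! Γ(ν+k+1))) (z/2)^(ν+2k)`. -/
noncomputable def besselI (ν z : ℝ) : ℝ :=
  ∑' k : ℕ, (1 / (k.factorial * Real.Gamma (ν + (k : ℝ) + 1))) * (z / 2) ^ (ν + 2 * (k : ℝ))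

/-!
Write `I_μ(z) = x^μ g_μ(y)` with `x = z/2`, `y = x²` and `g_μ` an entire power series in `y`. The
quantity `q_μ = y g_{μ+1}/g_μ = x I_{μ+1}/I_μ` satisfies `I_ν/I_{ν-1} = x/(ν + q_ν)` and, by the
recurrence `g_{μ-1} = μ g_μ + y g_{μ+1}`, also `q_ν (ν + 1 + q_{ν+1}) = y`. Using this to eliminate
`y = z²/4` and squaring, the upper bound becomes `q_{ν+1} < q_ν` and the lower bound
`q_ν - q_{ν+1} < 1/2`: these are the Turán-type inequalities `g_{μ-1} g_{μ+1} < g_μ²` and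
`2y (g_μ² - g_{μ-1} g_{μ+1}) < g_{μ-1} g_μ` at `μ = ν + 1`. Both hold coefficientwise: by
Chu–Vandermonde the Cauchy product `g_α g_β` has the coefficients
`Γ(α+β+2n+1) / (n! Γ(α+n+1) Γ(β+n+1) Γ(α+β+n+1))`, and for the three pairs involved these are
rational multiples of one another.
-/

open Real Finset Polynomial

theorem Polynomial.descPochhammer_eval_add {R : Type*} [CommRing R] (x y : R) (n : ℕ) :
    (descPochhammer R n).eval (x + y) = ∑ ij ∈ antidiagonal n,
      n.choose ij.1 * ((descPochhammer R ij.1).eval x * (descPochhammer R ij.2).eval y) := by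
  have smeval_eq (k : ℕ) (r : R) : (descPochhammer ℤ k).smeval r = (descPochhammer R k).eval r := by
    rw [descPochhammer_smeval_eq_ascPochhammer, ascPochhammer_smeval_eq_eval,
      descPochhammer_eval_eq_ascPochhammer]
  simpa only [smeval_eq] using Ring.descPochhammer_smeval_add n (Commute.all x y)

namespace Real

theorem Gamma_add_nat_eq_ascPochhammer_mul {s : ℝ} (hs : 0 < s) (m : ℕ) :
    Gamma (s + m) = (ascPochhammer ℝ m).eval s * Gamma s := by
  induction m with
  | zero => simp
  | succ m ih =>
    rw [Nat.cast_succ, ← add_assoc, Gamma_add_one (by positivity), ih, ascPochhammer_succ_eval]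
    ring

theorem Gamma_add_one_eq_descPochhammer_mul {x : ℝ} {m : ℕ} (h : (m : ℝ) - 1 < x) :
    Gamma (x + 1) = (descPochhammer ℝ m).eval x * Gamma (x - m + 1) := by
  rw [descPochhammer_eval_eq_ascPochhammer, ← Gamma_add_nat_eq_ascPochhammer_mul (by linarith)]
  congr 1
  ring

end Real

namespace BesselRatio

noncomputable def besselCoeff (α : ℝ) (k : ℕ) : ℝ := 1 / (k.factorial * Gamma (α + k + 1))

noncomputable def besselProdCoeff (α β : ℝ) (n : ℕ) : ℝ :=
  Gamma (α + β + 2 * n + 1) /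
    (n.factorial * Gamma (α + n + 1) * Gamma (β + n + 1) * Gamma (α + β + n + 1))

theorem besselCoeff_mul_besselCoeff {α β : ℝ} (hα : -1 < α) (hβ : -1 < β) (i j : ℕ) :
    besselCoeff α i * besselCoeff β j =
      (i + j).choose i * ((descPochhammer ℝ i).eval (β + (i + j : ℕ)) *
        (descPochhammer ℝ j).eval (α + (i + j : ℕ))) /
      ((i + j).factorial * Gamma (α + (i + j : ℕ) + 1) * Gamma (β + (i + j : ℕ) + 1)) := by
  have hi : (0 : ℝ) ≤ i := i.cast_nonneg
  have hj : (0 : ℝ) ≤ j := j.cast_nonneg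
  have hΓα : Gamma (α + (i + j : ℕ) + 1) =
      (descPochhammer ℝ j).eval (α + (i + j : ℕ)) * Gamma (α + i + 1) := by
    rw [Gamma_add_one_eq_descPochhammer_mul (m := j) (by push_cast; linarith)]
    congr 2
    push_cast
    ring
  have hΓβ : Gamma (β + (i + j : ℕ) + 1) =
      (descPochhammer ℝ i).eval (β + (i + j : ℕ)) * Gamma (β + j + 1) := by
    rw [Gamma_add_one_eq_descPochhammer_mul (m := i) (by push_cast; linarith)]
    congr 2
    push_cast
    ring
  have hfact : ((i + j).factorial : ℝ) = (i + j).choose i * i.factorial * j.factorial := by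
    rw [Nat.choose_symm_add]
    exact_mod_cast (Nat.add_choose_mul_factorial_mul_factorial i j).symm
  have : 0 < (descPochhammer ℝ j).eval (α + (i + j : ℕ)) :=
    descPochhammer_pos (by push_cast; linarith)
  have : 0 < (descPochhammer ℝ i).eval (β + (i + j : ℕ)) :=
    descPochhammer_pos (by push_cast; linarith)
  have : 0 < Gamma (α + i + 1) := Gamma_pos_of_pos (by linarith)
  have : 0 < Gamma (β + j + 1) := Gamma_pos_of_pos (by linarith)
  have : (0 : ℝ) < (i + j).choose i := by exact_mod_cast Nat.choose_pos (by omega)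
  rw [besselCoeff, besselCoeff, hΓα, hΓβ, hfact]
  field_simp

theorem sum_antidiagonal_besselCoeff_mul {α β : ℝ} (hα : -1 < α) (hβ : -1 < β)
    (hαβ : -1 < α + β) (n : ℕ) :
    ∑ ij ∈ antidiagonal n, besselCoeff α ij.1 * besselCoeff β ij.2 = besselProdCoeff α β n := by
  have hterm : ∀ ij ∈ antidiagonal n, besselCoeff α ij.1 * besselCoeff β ij.2 =
      n.choose ij.1 * ((descPochhammer ℝ ij.1).eval (β + n) *
        (descPochhammer ℝ ij.2).eval (α + n)) /
      (n.factorial * Gamma (α + n + 1) * Gamma (β + n + 1)) := by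
    rintro ⟨i, j⟩ hij
    rw [HasAntidiagonal.mem_antidiagonal] at hij
    subst hij
    exact besselCoeff_mul_besselCoeff hα hβ i j
  have hΓ : Gamma (α + β + 2 * n + 1) =
      (descPochhammer ℝ n).eval (α + β + 2 * n) * Gamma (α + β + n + 1) := by
    rw [Gamma_add_one_eq_descPochhammer_mul (m := n) (by linarith)]
    congr 2
    ring
  have : 0 < Gamma (α + β + n + 1) := Gamma_pos_of_pos (by linarith [n.cast_nonneg (α := ℝ)])
  rw [sum_congr rfl hterm, ← sum_div, ← descPochhammer_eval_add,
    show β + n + (α + n) = α + β + 2 * n by ring, besselProdCoeff, hΓ]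
  field_simp

theorem besselCoeff_nonneg {α : ℝ} {k : ℕ} (h : 0 ≤ α + k + 1) : 0 ≤ besselCoeff α k := by
  have : 0 ≤ Gamma (α + k + 1) := Gamma_nonneg_of_nonneg h
  unfold besselCoeff
  positivity

theorem besselCoeff_le_inv_factorial {α : ℝ} {k : ℕ} (h : 1 ≤ α + k) :
    besselCoeff α k ≤ 1 / k.factorial := by
  have hΓ : Gamma 2 ≤ Gamma (α + k + 1) :=
    Gamma_strictMonoOn_Ici.monotoneOn (Set.mem_Ici.mpr le_rfl) (Set.mem_Ici.mpr (by linarith))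
      (by linarith)
  unfold besselCoeff
  gcongr
  exact le_mul_of_one_le_right (by positivity) (Gamma_two ▸ hΓ)

theorem summable_norm_besselCoeff_mul_pow (α y : ℝ) :
    Summable fun k => ‖besselCoeff α k * y ^ k‖ := by
  refine .of_norm_bounded_eventually_nat (summable_pow_div_factorial |y|) ?_
  filter_upwards [Filter.eventually_ge_atTop ⌈1 - α⌉₊] with k hk
  have hαk : 1 ≤ α + k := by linarith [(Nat.ceil_le.mp hk : 1 - α ≤ k)]
  rw [norm_norm, norm_mul, norm_pow, Real.norm_eq_abs, Real.norm_eq_abs,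
    abs_of_nonneg (besselCoeff_nonneg (by linarith)), div_eq_mul_one_div, mul_comm]
  gcongr
  exact besselCoeff_le_inv_factorial hαk

theorem besselCoeff_sub_one (μ : ℝ) (k : ℕ) :
    besselCoeff (μ - 1) k = (μ + k) * besselCoeff μ k := by
  rcases eq_or_ne (μ + k) 0 with h | h
  · simp [besselCoeff, show μ - 1 + k + 1 = 0 by linarith, h]
  · rw [besselCoeff, besselCoeff, show μ - 1 + k + 1 = μ + k by ring,
      show μ + k + 1 = (μ + k) + 1 by ring, Gamma_add_one h]
    field_simp

theorem besselCoeff_add_one (μ : ℝ) (k : ℕ) :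
    besselCoeff (μ + 1) k = (k + 1) * besselCoeff μ (k + 1) := by
  rw [besselCoeff, besselCoeff, Nat.factorial_succ]
  push_cast
  rw [show μ + 1 + k + 1 = μ + (k + 1) + 1 by ring]
  field_simp

noncomputable def besselSeries (α y : ℝ) : ℝ := ∑' k, besselCoeff α k * y ^ k

theorem summable_besselCoeff_mul_pow (α y : ℝ) : Summable fun k => besselCoeff α k * y ^ k :=
  (summable_norm_besselCoeff_mul_pow α y).of_norm

theorem besselI_eq_rpow_mul_besselSeries (α : ℝ) {z : ℝ} (hz : 0 < z) :
    besselI α z = (z / 2) ^ α * besselSeries α ((z / 2) ^ 2) := by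
  rw [besselI, besselSeries, ← tsum_mul_left]
  refine tsum_congr fun k => ?_
  rw [rpow_add (by positivity), show 2 * (k : ℝ) = (2 * k : ℕ) by push_cast; ring, rpow_natCast,
    pow_mul, besselCoeff]
  ring

theorem besselSeries_pos {α y : ℝ} (hα : -1 < α) (hy : 0 ≤ y) : 0 < besselSeries α y := by
  refine (summable_besselCoeff_mul_pow α y).tsum_pos
    (fun k => mul_nonneg (besselCoeff_nonneg (by linarith [k.cast_nonneg (α := ℝ)]))
      (by positivity)) 0 ?_
  have : 0 < Gamma (α + 1) := Gamma_pos_of_pos (by linarith)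
  simp [besselCoeff, this]

theorem besselSeries_sub_one (μ y : ℝ) :
    besselSeries (μ - 1) y = μ * besselSeries μ y + y * besselSeries (μ + 1) y := by
  have hs := summable_besselCoeff_mul_pow μ y
  have hshift :
      HasSum (fun k : ℕ => (k : ℝ) * besselCoeff μ k * y ^ k) (y * besselSeries (μ + 1) y) := by
    rw [← hasSum_nat_add_iff' 1]
    simpa [besselSeries, besselCoeff_add_one, pow_succ, mul_assoc, mul_comm, mul_left_comm] using
      (summable_besselCoeff_mul_pow (μ + 1) y).hasSum.mul_left y
  refine ((hs.hasSum.mul_left μ).add hshift).tsum_eq ▸ tsum_congr fun k => ?_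
  rw [besselCoeff_sub_one]
  ring

theorem hasSum_besselProdCoeff_mul_pow {α β : ℝ} (hα : -1 < α) (hβ : -1 < β)
    (hαβ : -1 < α + β) (y : ℝ) :
    HasSum (fun n => besselProdCoeff α β n * y ^ n) (besselSeries α y * besselSeries β y) := by
  have hf := summable_norm_besselCoeff_mul_pow α y
  have hg := summable_norm_besselCoeff_mul_pow β y
  have hcoeff (n : ℕ) : ∑ ij ∈ antidiagonal n,
      besselCoeff α ij.1 * y ^ ij.1 * (besselCoeff β ij.2 * y ^ ij.2) =
        besselProdCoeff α β n * y ^ n := by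
    rw [← sum_antidiagonal_besselCoeff_mul hα hβ hαβ, sum_mul]
    refine sum_congr rfl fun ij hij => ?_
    rw [← HasAntidiagonal.mem_antidiagonal.mp hij, pow_add]
    ring
  rw [besselSeries, besselSeries, tsum_mul_tsum_eq_tsum_sum_antidiagonal_of_summable_norm hf hg]
  simp only [hcoeff]
  exact ((summable_norm_sum_mul_antidiagonal_of_summable_norm hf hg).of_norm.congr hcoeff).hasSum

theorem besselProdCoeff_pos {α β : ℝ} (hα : -1 < α) (hβ : -1 < β) (hαβ : -1 < α + β)
    (n : ℕ) : 0 < besselProdCoeff α β n := by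
  have hn : (0 : ℝ) ≤ n := n.cast_nonneg
  have h₁ : 0 < Gamma (α + β + 2 * n + 1) := Gamma_pos_of_pos (by linarith)
  have h₂ : 0 < Gamma (α + n + 1) := Gamma_pos_of_pos (by linarith)
  have h₃ : 0 < Gamma (β + n + 1) := Gamma_pos_of_pos (by linarith)
  have h₄ : 0 < Gamma (α + β + n + 1) := Gamma_pos_of_pos (by linarith)
  unfold besselProdCoeff
  positivity

theorem besselProdCoeff_sub_one_add_one {μ : ℝ} (hμ : 0 < μ) (n : ℕ) :
    besselProdCoeff (μ - 1) (μ + 1) n = (μ + n) / (μ + n + 1) * besselProdCoeff μ μ n := by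
  have hpos : 0 < μ + n := by positivity
  have hΓ₁ : Gamma (μ + n + 1) = (μ + n) * Gamma (μ + n) := Gamma_add_one hpos.ne'
  have hΓ₂ : Gamma (μ + 1 + n + 1) = (μ + n + 1) * ((μ + n) * Gamma (μ + n)) := by
    rw [show μ + 1 + n + 1 = (μ + n + 1) + 1 by ring, Gamma_add_one (by positivity), hΓ₁]
  have : 0 < Gamma (μ + n) := Gamma_pos_of_pos hpos
  rw [besselProdCoeff, besselProdCoeff, hΓ₂, show μ - 1 + n + 1 = μ + n by ring, hΓ₁,
    show μ - 1 + (μ + 1) = μ + μ by ring]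
  field_simp

theorem besselProdCoeff_sub_one_succ {μ : ℝ} (hμ : 0 < μ) (n : ℕ) :
    besselProdCoeff (μ - 1) μ (n + 1) =
      (2 * μ + 2 * n + 1) / ((n + 1) * (μ + n + 1)) * besselProdCoeff μ μ n := by
  have hpos : 0 < μ + n + 1 := by positivity
  have hΓ₁ : Gamma (μ + (n + 1 : ℕ) + 1) = (μ + n + 1) * Gamma (μ + n + 1) := by
    rw [show μ + (n + 1 : ℕ) + 1 = (μ + n + 1) + 1 by push_cast; ring, Gamma_add_one hpos.ne']
  have hΓ₂ : Gamma (μ - 1 + μ + 2 * (n + 1 : ℕ) + 1) =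
      (2 * μ + 2 * n + 1) * Gamma (μ + μ + 2 * n + 1) := by
    rw [show μ - 1 + μ + 2 * (n + 1 : ℕ) + 1 = (μ + μ + 2 * n + 1) + 1 by push_cast; ring,
      Gamma_add_one (by positivity)]
    ring
  have : 0 < Gamma (μ + n + 1) := Gamma_pos_of_pos hpos
  rw [besselProdCoeff, besselProdCoeff, hΓ₁, hΓ₂, Nat.factorial_succ,
    show μ - 1 + (n + 1 : ℕ) + 1 = μ + n + 1 by push_cast; ring,
    show μ - 1 + μ + (n + 1 : ℕ) + 1 = μ + μ + n + 1 by push_cast; ring]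
  push_cast
  field_simp

theorem besselProdCoeff_sub_one_add_one_lt {μ : ℝ} (hμ : 0 < μ) (n : ℕ) :
    besselProdCoeff (μ - 1) (μ + 1) n < besselProdCoeff μ μ n := by
  rw [besselProdCoeff_sub_one_add_one hμ]
  exact mul_lt_of_lt_one_left (besselProdCoeff_pos (by linarith) (by linarith) (by linarith) n)
    ((div_lt_one (by positivity)).mpr (by linarith))

theorem two_mul_besselProdCoeff_sub_le {μ : ℝ} (hμ : 1 / 2 ≤ μ) (n : ℕ) :
    2 * (besselProdCoeff μ μ n - besselProdCoeff (μ - 1) (μ + 1) n) ≤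
      besselProdCoeff (μ - 1) μ (n + 1) := by
  have hμ₀ : 0 < μ := by linarith
  have hP := besselProdCoeff_pos (by linarith) (by linarith) (by linarith) n (α := μ) (β := μ)
  rw [besselProdCoeff_sub_one_add_one hμ₀, besselProdCoeff_sub_one_succ hμ₀,
    show 2 * (besselProdCoeff μ μ n - (μ + n) / (μ + n + 1) * besselProdCoeff μ μ n) =
      2 * (n + 1) / ((n + 1) * (μ + n + 1)) * besselProdCoeff μ μ n by field_simp; ring]
  gcongr
  linarith

theorem besselSeries_turan {μ y : ℝ} (hμ : 0 < μ) (hy : 0 ≤ y) :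
    besselSeries (μ - 1) y * besselSeries (μ + 1) y < besselSeries μ y ^ 2 := by
  rw [sq]
  refine hasSum_lt (fun n => ?_) ?_ (hasSum_besselProdCoeff_mul_pow (by linarith) (by linarith)
    (by linarith) y) (hasSum_besselProdCoeff_mul_pow (by linarith) (by linarith) (by linarith) y)
    (i := 0)
  · exact mul_le_mul_of_nonneg_right (besselProdCoeff_sub_one_add_one_lt hμ n).le (by positivity)
  · simpa using besselProdCoeff_sub_one_add_one_lt hμ 0

theorem besselSeries_turan_gap {μ y : ℝ} (hμ : 1 / 2 ≤ μ) (hy : 0 ≤ y) :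
    2 * y * (besselSeries μ y ^ 2 - besselSeries (μ - 1) y * besselSeries (μ + 1) y) <
      besselSeries (μ - 1) y * besselSeries μ y := by
  have hsq := hasSum_besselProdCoeff_mul_pow (α := μ) (β := μ) (by linarith) (by linarith)
    (by linarith) y
  have hturan := hasSum_besselProdCoeff_mul_pow (α := μ - 1) (β := μ + 1) (by linarith)
    (by linarith) (by linarith) y
  have htail := (hasSum_nat_add_iff' 1).mpr (hasSum_besselProdCoeff_mul_pow (α := μ - 1) (β := μ)
    (by linarith) (by linarith) (by linarith) y)
  have hterm (n : ℕ) :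
      2 * y * (besselProdCoeff μ μ n * y ^ n - besselProdCoeff (μ - 1) (μ + 1) n * y ^ n) ≤
        besselProdCoeff (μ - 1) μ (n + 1) * y ^ (n + 1) :=
    calc 2 * y * (besselProdCoeff μ μ n * y ^ n - besselProdCoeff (μ - 1) (μ + 1) n * y ^ n)
        = 2 * (besselProdCoeff μ μ n - besselProdCoeff (μ - 1) (μ + 1) n) * y ^ (n + 1) := by
          ring
      _ ≤ besselProdCoeff (μ - 1) μ (n + 1) * y ^ (n + 1) := by
          gcongr
          exact two_mul_besselProdCoeff_sub_le hμ n
  have hle := hasSum_le hterm ((hsq.sub hturan).mul_left (2 * y)) htail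
  simp only [range_one, sum_singleton, pow_zero, mul_one] at hle
  have h₀ := besselProdCoeff_pos (α := μ - 1) (β := μ) (by linarith) (by linarith)
    (by linarith) 0
  rw [sq]
  linarith

noncomputable def besselRatio (μ y : ℝ) : ℝ := y * besselSeries (μ + 1) y / besselSeries μ y

theorem besselRatio_pos {μ y : ℝ} (hμ : -1 < μ) (hy : 0 < y) : 0 < besselRatio μ y := by
  have := besselSeries_pos hμ hy.le
  have := besselSeries_pos (α := μ + 1) (by linarith) hy.le
  unfold besselRatio
  positivity

theorem besselRatio_mul_add_besselRatio {μ y : ℝ} (hμ : -1 < μ) (hy : 0 ≤ y) :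
    besselRatio μ y * (μ + 1 + besselRatio (μ + 1) y) = y := by
  have hrec := besselSeries_sub_one (μ + 1) y
  rw [add_sub_cancel_right] at hrec
  have := besselSeries_pos hμ hy
  have := besselSeries_pos (α := μ + 1) (by linarith) hy
  unfold besselRatio
  field_simp
  linear_combination -y * hrec

theorem besselRatio_add_one_lt {μ y : ℝ} (hμ : -1 < μ) (hy : 0 < y) :
    besselRatio (μ + 1) y < besselRatio μ y := by
  have hturan := besselSeries_turan (μ := μ + 1) (by linarith) hy.le
  rw [add_sub_cancel_right] at hturan
  have := besselSeries_pos hμ hy.le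
  have := besselSeries_pos (α := μ + 1) (by linarith) hy.le
  unfold besselRatio
  rw [div_lt_div_iff₀ (by positivity) (by positivity)]
  nlinarith

theorem besselRatio_sub_besselRatio_add_one_lt {μ y : ℝ} (hμ : -1 / 2 ≤ μ) (hy : 0 ≤ y) :
    besselRatio μ y - besselRatio (μ + 1) y < 1 / 2 := by
  have hgap := besselSeries_turan_gap (μ := μ + 1) (by linarith) hy
  rw [add_sub_cancel_right] at hgap
  have := besselSeries_pos (α := μ) (by linarith) hy
  have := besselSeries_pos (α := μ + 1) (by linarith) hy
  unfold besselRatio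
  rw [div_sub_div _ _ (by positivity) (by positivity), div_lt_div_iff₀ (by positivity) two_pos]
  nlinarith

theorem besselI_div_besselI_sub_one {ν z : ℝ} (hν : -1 < ν) (hz : 0 < z) :
    besselI ν z / besselI (ν - 1) z = z / 2 / (ν + besselRatio ν ((z / 2) ^ 2)) := by
  have := besselSeries_pos hν (by positivity : 0 ≤ (z / 2) ^ 2)
  have hx : (z / 2) ^ ν = (z / 2) ^ (ν - 1) * (z / 2) := by
    rw [← rpow_add_one (by positivity), sub_add_cancel]
  have := rpow_pos_of_pos (by positivity : 0 < z / 2) (ν - 1)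
  rw [besselI_eq_rpow_mul_besselSeries ν hz, besselI_eq_rpow_mul_besselSeries (ν - 1) hz,
    besselSeries_sub_one, hx, besselRatio]
  generalize (z / 2) ^ 2 = y at *
  field_simp

end BesselRatio

open BesselRatio in
theorem bessel_ratio_bounds (ν z : ℝ) (hν : 0 ≤ ν) (hz : 0 < z) :
    z / (ν - 1/2 + Real.sqrt ((ν + 1/2) ^ 2 + z ^ 2)) < besselI ν z / besselI (ν - 1) z ∧
      besselI ν z / besselI (ν - 1) z < z / (ν - 1 + Real.sqrt ((ν + 1) ^ 2 + z ^ 2)) := by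
  have hy : 0 < (z / 2) ^ 2 := by positivity
  set q := besselRatio ν ((z / 2) ^ 2)
  set q' := besselRatio (ν + 1) ((z / 2) ^ 2)
  have hq : 0 < q := besselRatio_pos (by linarith) hy
  have hrec : q * (ν + 1 + q') = (z / 2) ^ 2 := besselRatio_mul_add_besselRatio (by linarith) hy.le
  have hlt : q' < q := besselRatio_add_one_lt (by linarith) hy
  have hgap : q - q' < 1 / 2 := besselRatio_sub_besselRatio_add_one_lt (by linarith) hy.le
  have hs : ν + 1 / 2 + 2 * q < √((ν + 1 / 2) ^ 2 + z ^ 2) := by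
    rw [lt_sqrt (by positivity)]
    nlinarith
  have ht : √((ν + 1) ^ 2 + z ^ 2) < ν + 1 + 2 * q := by
    rw [sqrt_lt' (by positivity)]
    nlinarith
  have ht' : ν + 1 < √((ν + 1) ^ 2 + z ^ 2) := by
    rw [lt_sqrt (by positivity)]
    nlinarith
  rw [besselI_div_besselI_sub_one (by linarith) hz]
  constructor
  · rw [div_lt_div_iff₀ (by linarith) (by positivity)]
    nlinarith
  · rw [div_lt_div_iff₀ (by positivity) (by linarith)]
    nlinarith
end

section
/- For all real z > 0 and all real ν > 1/2, one has 1 < Γ(ν+1) · (2/z)^ν · I_ν(z) < cosh(z). -/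
theorem besselI_luke_bounds (z ν : ℝ) (hz : 0 < z) (hν : 1/2 < ν) :
    1 < Real.Gamma (ν + 1) * (2 / z) ^ ν * besselI ν z ∧
      Real.Gamma (ν + 1) * (2 / z) ^ ν * besselI ν z < Real.cosh z := by
  have hz2 : (0:ℝ) < z / 2 := by positivity
  have hνpos : (0:ℝ) < ν := lt_trans (by norm_num) hν
  have hΓpos : 0 < Real.Gamma (ν + 1) := Real.Gamma_pos_of_pos (by linarith)
  set P : ℕ → ℝ := fun k => ∏ j ∈ Finset.range k, (ν + j + 1) with hP
  have hPpos : ∀ k, 0 < P k := fun k => Finset.prod_pos (fun j _ => by positivity)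
  have hGamma : ∀ k : ℕ, Real.Gamma (ν + k + 1) = Real.Gamma (ν + 1) * P k := by
    intro k
    induction k with
    | zero => simp [hP]
    | succ n ih =>
      have hne : ν + n + 1 ≠ 0 := by positivity
      rw [Nat.cast_succ, show ν + ((n:ℝ)+1) + 1 = (ν + n + 1) + 1 by ring,
        Real.Gamma_add_one hne, ih]
      simp only [hP, Finset.prod_range_succ]
      ring
  set Q : ℕ → ℝ := fun k => ∏ j ∈ Finset.range k, ((j:ℝ) + 1/2) with hQ
  have hQpos : ∀ k, 0 < Q k := fun k => Finset.prod_pos (fun j _ => by positivity)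
  have hfact : ∀ k : ℕ, ((2*k).factorial : ℝ) = 4^k * (k.factorial : ℝ) * Q k := by
    intro k
    induction k with
    | zero => simp [hQ]
    | succ n ih =>
      rw [show 2*(n+1) = (2*n+1)+1 by ring, Nat.factorial_succ,
        show 2*n+1 = (2*n)+1 from rfl, Nat.factorial_succ, Nat.factorial_succ n]
      push_cast
      rw [ih]
      simp only [hQ, Finset.prod_range_succ]
      push_cast
      ring
  set f : ℕ → ℝ := fun k => (z/2)^(2*k) / (k.factorial * P k) with hf
  have hfpos : ∀ k, 0 < f k := fun k => by
    have h1 := hPpos k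
    have h2 : (0:ℝ) < k.factorial := Nat.cast_pos.mpr k.factorial_pos
    simp only [hf]
    positivity
  have key : ∀ k : ℕ, Real.Gamma (ν + 1) * (2 / z) ^ ν *
      ((1 / (k.factorial * Real.Gamma (ν + (k : ℝ) + 1))) * (z / 2) ^ (ν + 2 * (k : ℝ))) = f k := by
    intro k
    have h1 : (2 / z) ^ ν * (z / 2) ^ (ν + 2 * (k : ℝ)) = (z/2)^(2*k) := by
      rw [show ν + 2 * (k:ℝ) = ν + ((2*k : ℕ):ℝ) by push_cast; ring,
        Real.rpow_add hz2, Real.rpow_natCast, ← mul_assoc,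
        ← Real.mul_rpow (by positivity) hz2.le, div_mul_div_comm, mul_comm (2:ℝ) z,
        div_self (by positivity), Real.one_rpow, one_mul]
    rw [show Real.Gamma (ν + 1) * (2 / z) ^ ν *
        ((1 / (k.factorial * Real.Gamma (ν + (k : ℝ) + 1))) * (z / 2) ^ (ν + 2 * (k : ℝ))) =
        Real.Gamma (ν + 1) / (k.factorial * Real.Gamma (ν + (k : ℝ) + 1)) *
          ((2 / z) ^ ν * (z / 2) ^ (ν + 2 * (k : ℝ))) by ring, h1, hGamma k]
    have hk : (0:ℝ) < k.factorial := Nat.cast_pos.mpr k.factorial_pos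
    have hPk := hPpos k
    simp only [hf]
    field_simp
  have hsum_eq : Real.Gamma (ν + 1) * (2 / z) ^ ν * besselI ν z = ∑' k, f k := by
    rw [besselI, ← tsum_mul_left]
    exact tsum_congr key
  set g : ℕ → ℝ := fun k => z ^ (2*k) / ((2*k).factorial : ℝ) with hg
  have hgsummable : Summable g := (Real.hasSum_cosh z).summable
  have hle : ∀ k, f k ≤ g k := by
    intro k
    have hk : (0:ℝ) < k.factorial := Nat.cast_pos.mpr k.factorial_pos
    have hPk := hPpos k
    have hQk := hQpos k
    simp only [hf, hg]
    rw [hfact k]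
    have hzk : (z/2)^(2*k) = z^(2*k) / 4^k := by
      rw [div_pow, show (2:ℝ)^(2*k) = 4^k by rw [pow_mul]; norm_num]
    rw [hzk, div_div, div_le_div_iff₀ (by positivity) (by positivity)]
    have hQP : Q k ≤ P k := by
      simp only [hQ, hP]
      exact Finset.prod_le_prod (fun j _ => by positivity) (fun j _ => by linarith)
    have h := mul_le_mul_of_nonneg_left hQP
      (show (0:ℝ) ≤ z^(2*k) * 4^k * k.factorial by positivity)
    nlinarith [h]
  have hfsummable : Summable f :=
    Summable.of_nonneg_of_le (fun k => (hfpos k).le) hle hgsummable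
  have hstrict : f 1 < g 1 := by
    simp only [hf, hg, hP]
    norm_num [Finset.prod_range_one]
    rw [div_pow, div_lt_div_iff₀ (by positivity) (by norm_num)]
    nlinarith [sq_nonneg z, hz]
  have hf0 : f 0 = 1 := by simp [hf, hP]
  constructor
  · rw [hsum_eq]
    have h01 : f 0 + f 1 ≤ ∑' k, f k := by
      have := Summable.sum_le_tsum (Finset.range 2) (fun i _ => (hfpos i).le) hfsummable
      simpa [Finset.sum_range_succ] using this
    linarith [hfpos 1]
  · rw [hsum_eq, Real.cosh_eq_tsum]
    exact Summable.tsum_lt_tsum_of_nonneg (fun k => (hfpos k).le) hle hstrict hgsummable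
end

section
/- For every real ν > 1/2, the Gamma function satisfies √(2e) · ((ν + 1/2)/e)^{ν + 1/2} < Γ(ν + 1) < √(2π) · ((ν + 1/2)/e)^{ν + 1/2}. -/
/-!
With `g x = log Γ(x + 1) - (x + 1/2) log (x + 1/2) + (x + 1/2)` we have
`Γ(x + 1) = exp (g x) ((x + 1/2) / e) ^ (x + 1/2)`, so it suffices that
`log (2e) / 2 < g ν < log (2π) / 2`.

Combining Stirling's formula for `n!` with the Euler limit `log Γ(x + n + 1) - log n! - x log n → 0`
gives `g (x + n) → log (2π) / 2`. The increment `g (x + 1) - g x` has derivative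
`1 / (x + 1) - log ((x + 3/2) / (x + 1/2)) < 0`, so it is strictly decreasing, and it tends to `0`
along `x + n`; hence it is positive and `g x < g (x + 1) ≤ log (2π) / 2`. Likewise, for `1/2 ≤ x`
the differences `g (x + n) - g (1/2 + n)` decrease to `0`, so
`g x ≥ g (1/2) = log π / 2 - log 2 + 1`, which exceeds `log (2e) / 2` because `π e > 8`.
-/

open Real Filter Topology

lemma tendsto_log_Gamma_add_nat_sub_log_factorial {x : ℝ} (hx : 0 < x) :
    Tendsto (fun n : ℕ => log (Gamma (x + n + 1)) - log n.factorial - x * log n) atTop (𝓝 0) := by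
  have hfeq : ∀ {y : ℝ}, 0 < y → log (Gamma (y + 1)) = log (Gamma y) + log y := fun hy => by
    rw [Gamma_add_one hy.ne', log_mul hy.ne' (Gamma_pos_of_pos hy).ne', add_comm]
  have h := (BohrMollerup.tendsto_log_gamma hx).const_sub (log (Gamma x))
  rw [sub_self] at h
  refine h.congr fun n => ?_
  have hsum := BohrMollerup.f_add_nat_eq (f := log ∘ Gamma) hfeq hx (n + 1)
  simp only [Function.comp_apply, Nat.cast_add_one, ← add_assoc] at hsum
  rw [BohrMollerup.logGammaSeq, hsum]
  ring

lemma tendsto_log_factorial_sub_stirling :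
    Tendsto (fun n : ℕ => log n.factorial - ((n + 1/2) * log n - n)) atTop
      (𝓝 (log (2 * π) / 2)) := by
  have h := ((continuousAt_log (sqrt_pos.2 pi_pos).ne').tendsto.comp
    Stirling.tendsto_stirlingSeq_sqrt_pi).add_const (log 2 / 2)
  rw [log_sqrt pi_pos.le, ← add_div, ← log_mul pi_pos.ne' two_ne_zero, mul_comm] at h
  refine h.congr' ?_
  filter_upwards [eventually_ne_atTop 0] with n hn
  have hn0 : (n : ℝ) ≠ 0 := Nat.cast_ne_zero.2 hn
  rw [Function.comp_apply, Stirling.log_stirlingSeq_formula, log_mul two_ne_zero hn0,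
    log_div hn0 (exp_ne_zero 1), log_exp]
  ring

lemma tendsto_nat_add_mul_log_nat_add_sub_log (a : ℝ) :
    Tendsto (fun n : ℕ => (n + a) * (log (n + a) - log n)) atTop (𝓝 a) := by
  have h := ((tendsto_mul_log_one_add_div_atTop (-a)).comp
    (tendsto_atTop_add_const_right _ a tendsto_natCast_atTop_atTop)).neg
  rw [neg_neg] at h
  refine h.congr' ?_
  filter_upwards [eventually_gt_atTop 0, eventually_gt_atTop ⌈-a⌉₊] with n hn hna
  have hn0 : (0 : ℝ) < n := Nat.cast_pos.2 hn
  have hna0 : (0 : ℝ) < n + a := by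
    linarith [Nat.lt_of_ceil_lt hna]
  rw [Function.comp_apply, show 1 + -a / (n + a) = n / (n + a) by field_simp; ring,
    log_div hn0.ne' hna0.ne']
  ring

lemma one_div_add_half_lt_log_add_one_sub_log {t : ℝ} (ht : 0 < t) :
    1 / (t + 1/2) < log (t + 1) - log t := by
  have h := lt_log_one_add_of_pos (inv_pos.2 ht)
  rwa [show 2 * t⁻¹ / (t⁻¹ + 2) = 1 / (t + 1/2) by field_simp; ring,
    show 1 + t⁻¹ = (t + 1) / t by field_simp, log_div (by positivity) ht.ne'] at h

noncomputable def gammaRemainder (x : ℝ) : ℝ :=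
  log (Gamma (x + 1)) - (x + 1/2) * log (x + 1/2) + (x + 1/2)

noncomputable def gammaRemainderIncrement (x : ℝ) : ℝ :=
  log (x + 1) + 1 - (x + 3/2) * log (x + 3/2) + (x + 1/2) * log (x + 1/2)

lemma gammaRemainder_add_one {x : ℝ} (hx : -1 < x) :
    gammaRemainder (x + 1) = gammaRemainder x + gammaRemainderIncrement x := by
  have hx1 : 0 < x + 1 := by linarith
  rw [gammaRemainder, gammaRemainder, gammaRemainderIncrement, Gamma_add_one hx1.ne',
    log_mul hx1.ne' (Gamma_pos_of_pos hx1).ne']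
  ring_nf

lemma tendsto_gammaRemainder_add_nat {x : ℝ} (hx : 0 < x) :
    Tendsto (fun n : ℕ => gammaRemainder (x + n)) atTop (𝓝 (log (2 * π) / 2)) := by
  have h := ((tendsto_log_Gamma_add_nat_sub_log_factorial hx).add
    tendsto_log_factorial_sub_stirling).sub (tendsto_nat_add_mul_log_nat_add_sub_log (x + 1/2))
  have h' := h.add_const (x + 1/2)
  rw [zero_add, sub_add_cancel] at h'
  refine h'.congr fun n => ?_
  rw [gammaRemainder, show x + n + 1/2 = n + (x + 1/2) by ring]
  ring

lemma hasDerivAt_gammaRemainderIncrement {x : ℝ} (hx : -1/2 < x) :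
    HasDerivAt gammaRemainderIncrement (1 / (x + 1) - log (x + 3/2) + log (x + 1/2)) x := by
  have hshift (c : ℝ) (hc : 0 < x + c) :
      HasDerivAt (fun y => (y + c) * log (y + c)) (log (x + c) + 1) x :=
    (hasDerivAt_mul_log hc.ne').comp_add_const x c
  have hlog : HasDerivAt (fun y => log (y + 1)) (1 / (x + 1)) x := by
    simpa using ((hasDerivAt_id' x).add_const 1).log (by linarith)
  convert! (((hlog.add_const 1).sub (hshift (3/2) (by linarith))).add
    (hshift (1/2) (by linarith))) using 1
  ring

lemma strictAntiOn_gammaRemainderIncrement :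
    StrictAntiOn gammaRemainderIncrement (Set.Ioi (-1/2)) := by
  refine strictAntiOn_of_deriv_neg (convex_Ioi _)
    (fun x hx => (hasDerivAt_gammaRemainderIncrement hx).continuousAt.continuousWithinAt) ?_
  intro x hx
  rw [interior_Ioi] at hx
  have h := one_div_add_half_lt_log_add_one_sub_log
    (show 0 < x + 1/2 by linarith [Set.mem_Ioi.1 hx])
  rw [show x + 1/2 + 1/2 = x + 1 by ring, show x + 1/2 + 1 = x + 3/2 by ring] at h
  rw [(hasDerivAt_gammaRemainderIncrement hx).deriv]
  linarith

lemma tendsto_gammaRemainderIncrement_add_nat {x : ℝ} (hx : 0 < x) :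
    Tendsto (fun n : ℕ => gammaRemainderIncrement (x + n)) atTop (𝓝 0) := by
  have h := ((tendsto_gammaRemainder_add_nat hx).comp (tendsto_add_atTop_nat 1)).sub
    (tendsto_gammaRemainder_add_nat hx)
  rw [sub_self] at h
  refine h.congr fun n => ?_
  have hxn : -1 < x + n := by linarith [(Nat.cast_nonneg n : (0 : ℝ) ≤ n)]
  rw [Function.comp_apply, Nat.cast_add_one, ← add_assoc, gammaRemainder_add_one hxn]
  ring

lemma gammaRemainderIncrement_pos {x : ℝ} (hx : 0 < x) : 0 < gammaRemainderIncrement x := by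
  have hmem {y : ℝ} (hy : 0 < y) : y ∈ Set.Ioi (-1/2 : ℝ) := Set.mem_Ioi.2 (by linarith)
  have hanti : Antitone (fun n : ℕ => gammaRemainderIncrement (x + 1 + n)) :=
    fun m n hmn => strictAntiOn_gammaRemainderIncrement.antitoneOn (hmem (by positivity))
      (hmem (by positivity)) (by gcongr)
  have h := hanti.le_of_tendsto (tendsto_gammaRemainderIncrement_add_nat (by linarith)) 0
  rw [Nat.cast_zero, add_zero] at h
  exact h.trans_lt (strictAntiOn_gammaRemainderIncrement (hmem hx) (hmem (by linarith))
    (lt_add_one x))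

lemma gammaRemainder_lt_log_two_mul_pi_div_two {x : ℝ} (hx : 0 < x) :
    gammaRemainder x < log (2 * π) / 2 := by
  have hmono : Monotone (fun n : ℕ => gammaRemainder (x + 1 + n)) := by
    refine monotone_nat_of_le_succ fun n => ?_
    have hxn : 0 < x + 1 + n := by positivity
    rw [Nat.cast_add_one, ← add_assoc, gammaRemainder_add_one (by linarith)]
    linarith [gammaRemainderIncrement_pos hxn]
  have h := hmono.ge_of_tendsto (tendsto_gammaRemainder_add_nat (by linarith)) 0
  rw [Nat.cast_zero, add_zero] at h
  have := gammaRemainderIncrement_pos hx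
  rw [gammaRemainder_add_one (by linarith)] at h
  linarith

lemma monotoneOn_gammaRemainder : MonotoneOn gammaRemainder (Set.Ioi 0) := by
  intro x hx y hy hxy
  have hanti : Antitone (fun n : ℕ => gammaRemainder (y + n) - gammaRemainder (x + n)) := by
    refine antitone_nat_of_succ_le fun n => ?_
    have hxn : 0 < x + n := by linarith [Set.mem_Ioi.1 hx, (Nat.cast_nonneg n : (0 : ℝ) ≤ n)]
    rw [Nat.cast_add_one, ← add_assoc, ← add_assoc, gammaRemainder_add_one (by linarith),
      gammaRemainder_add_one (by linarith)]
    have := strictAntiOn_gammaRemainderIncrement.antitoneOn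
      (Set.mem_Ioi.2 (by linarith : (-1/2 : ℝ) < x + n))
      (Set.mem_Ioi.2 (by linarith : (-1/2 : ℝ) < y + n)) (by linarith : x + n ≤ y + n)
    linarith
  have hlim := (tendsto_gammaRemainder_add_nat hy).sub (tendsto_gammaRemainder_add_nat hx)
  rw [sub_self] at hlim
  simpa using hanti.le_of_tendsto hlim 0

lemma gammaRemainder_one_half : gammaRemainder (1/2) = log π / 2 - log 2 + 1 := by
  rw [gammaRemainder, Gamma_add_one (by norm_num), Gamma_one_half_eq,
    log_mul (by norm_num) (sqrt_pos.2 pi_pos).ne', log_sqrt pi_pos.le, one_div, log_inv]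
  norm_num
  ring

lemma log_two_mul_exp_one_div_two_lt_gammaRemainder_one_half :
    log (2 * exp 1) / 2 < gammaRemainder (1/2) := by
  have h : log 8 < log (π * exp 1) :=
    log_lt_log (by norm_num) (by nlinarith [exp_one_gt_d9, pi_gt_d6])
  rw [show (8 : ℝ) = 2 ^ 3 by norm_num, log_pow, log_mul pi_pos.ne' (exp_ne_zero 1),
    log_exp] at h
  rw [gammaRemainder_one_half, log_mul two_ne_zero (exp_ne_zero 1), log_exp]
  push_cast at h
  linarith

lemma Gamma_add_one_eq_exp_gammaRemainder_mul_rpow {x : ℝ} (hx : -1/2 < x) :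
    Gamma (x + 1) = exp (gammaRemainder x) * ((x + 1/2) / exp 1) ^ (x + 1/2) := by
  have hx' : 0 < x + 1/2 := by linarith
  rw [rpow_def_of_pos (div_pos hx' (exp_pos 1)), ← exp_add, log_div hx'.ne' (exp_ne_zero 1),
    log_exp, gammaRemainder]
  convert (exp_log (Gamma_pos_of_pos (by linarith : 0 < x + 1))).symm using 2
  ring

theorem gamma_batir_bounds (ν : ℝ) (hν : 1/2 < ν) :
    Real.sqrt (2 * Real.exp 1) * ((ν + 1/2) / Real.exp 1) ^ (ν + 1/2) < Real.Gamma (ν + 1) ∧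
      Real.Gamma (ν + 1) < Real.sqrt (2 * Real.pi) * ((ν + 1/2) / Real.exp 1) ^ (ν + 1/2) := by
  have hsqrt {c : ℝ} (hc : 0 < c) : √c = exp (log c / 2) := by
    rw [sqrt_eq_rpow, rpow_def_of_pos hc, mul_one_div]
  have hpow : 0 < ((ν + 1/2) / exp 1) ^ (ν + 1/2) := by positivity
  rw [Gamma_add_one_eq_exp_gammaRemainder_mul_rpow (by linarith), hsqrt (by positivity),
    hsqrt (by positivity)]
  refine ⟨mul_lt_mul_of_pos_right (exp_lt_exp.2 ?_) hpow,
    mul_lt_mul_of_pos_right (exp_lt_exp.2 ?_) hpow⟩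
  · exact log_two_mul_exp_one_div_two_lt_gammaRemainder_one_half.trans_le
      (monotoneOn_gammaRemainder (by norm_num) (by norm_num; linarith) hν.le)
  · exact gammaRemainder_lt_log_two_mul_pi_div_two (by linarith)
end

section
/- For all real z > 0 and all real ν > 1/2, one has I_ν(z) < (z/2)^ν · (1/√(2e)) · (e/(ν + 1/2))^{ν + 1/2} · (e^z + e^{−z})/2. -/
/-!
Since `(2k)! Γ(ν+1) ≤ 4^k k! Γ(ν+k+1)`, the series for `I_ν(z)` is dominated termwise by
`(z/2)^ν / Γ(ν+1)` times the series of `cosh z`. It remains to show the Stirling-type bound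
`Γ(x + 1/2) > √(2e) (x/e)^x` for `x = ν + 1/2 ≥ 1`.

Put `F(x) = log Γ(x + 1/2) - (x log x - x)` and `β(x) = 1/(24x - 6)`. Then
`F(x) - F(x+1) = log(1 + 1/(2x+1)) + x log(1 + 1/x) - 1`, and the first two terms of the series
`log(1 + 1/a) = 2 ∑ (2a+1)^(-2k-1)/(2k+1)` show that this is at least `β(x+1) - β(x)`, so `F + β`
decreases along unit steps. Log-convexity of `Γ` and Stirling's bound for `k!` give
`F(x+k) ≥ log √(2π) - O(1/k)`, hence `F(x) ≥ log √(2π) - β(x) ≥ log √(2π) - 1/18`, and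
`log π > 10/9` turns this into `F(x) > log √(2e)`.
-/

open Real

lemma le_log_one_add_inv {a : ℝ} (ha : 0 < a) :
    2 / (2 * a + 1) + 2 / (3 * (2 * a + 1) ^ 3) ≤ log (1 + a⁻¹) := by
  have h := sum_le_hasSum (Finset.range 2) (fun k _ => by positivity) (hasSum_log_one_add_inv ha)
  norm_num [Finset.sum_range_succ] at h
  have : 2 * a + 1 ≠ 0 := by positivity
  exact (le_of_eq (by field_simp)).trans h

lemma one_sub_log_bounds_le_inv_sub_inv {x : ℝ} (hx : 1 ≤ x) :
    1 - (2 / (4 * x + 3) + 2 / (3 * (4 * x + 3) ^ 3)) -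
        x * (2 / (2 * x + 1) + 2 / (3 * (2 * x + 1) ^ 3)) ≤
      (24 * x - 6)⁻¹ - (24 * (x + 1) - 6)⁻¹ := by
  obtain ⟨s, hs, rfl⟩ : ∃ s, 0 ≤ s ∧ x = 1 + s := ⟨x - 1, by linarith, by ring⟩
  rw [← sub_nonneg]
  have h1 : 24 * (1 + s) - 6 ≠ 0 := by linarith
  have h2 : 24 * (1 + s + 1) - 6 ≠ 0 := by linarith
  have key : (24 * (1 + s) - 6)⁻¹ - (24 * (1 + s + 1) - 6)⁻¹ -
      (1 - (2 / (4 * (1 + s) + 3) + 2 / (3 * (4 * (1 + s) + 3) ^ 3)) -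
        (1 + s) * (2 / (2 * (1 + s) + 1) + 2 / (3 * (2 * (1 + s) + 1) ^ 3))) =
      (897 + 2066 * s + 1868 * s ^ 2 + 784 * s ^ 3 + 128 * s ^ 4) /
        (3 * (4 * s + 7) ^ 3 * (2 * s + 3) ^ 3 * (4 * s + 3)) := by
    field_simp
    ring
  rw [key]
  positivity

noncomputable def stirlingDefect (x : ℝ) : ℝ := log (Gamma (x + 1 / 2)) - (x * log x - x)

lemma stirlingDefect_sub_add_one {x : ℝ} (hx : 0 < x) :
    stirlingDefect x - stirlingDefect (x + 1) =
      log (1 + (2 * x + 1)⁻¹) + x * log (1 + x⁻¹) - 1 := by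
  have h1 : 1 + (2 * x + 1)⁻¹ = (x + 1) / (x + 1 / 2) := by field_simp; ring
  have h2 : 1 + x⁻¹ = (x + 1) / x := by field_simp
  rw [stirlingDefect, stirlingDefect, show x + 1 + 1 / 2 = (x + 1 / 2) + 1 by ring,
    Gamma_add_one (by positivity), log_mul (by positivity) (Gamma_pos_of_pos (by positivity)).ne',
    h1, h2, log_div (by positivity) (by positivity), log_div (by positivity) (by positivity)]
  ring

lemma stirlingDefect_add_one_add_le {x : ℝ} (hx : 1 ≤ x) :
    stirlingDefect (x + 1) + (24 * (x + 1) - 6)⁻¹ ≤ stirlingDefect x + (24 * x - 6)⁻¹ := by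
  have h1 := le_log_one_add_inv (by linarith : 0 < 2 * x + 1)
  have h2 := mul_le_mul_of_nonneg_left (le_log_one_add_inv (by linarith : 0 < x))
    (by linarith : 0 ≤ x)
  rw [show 2 * (2 * x + 1) + 1 = 4 * x + 3 by ring] at h1
  linarith [stirlingDefect_sub_add_one (by linarith : 0 < x), one_sub_log_bounds_le_inv_sub_inv hx]

lemma stirlingDefect_add_nat_add_le {x : ℝ} (hx : 1 ≤ x) (k : ℕ) :
    stirlingDefect (x + k) + (24 * (x + k) - 6)⁻¹ ≤ stirlingDefect x + (24 * x - 6)⁻¹ := by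
  induction k with
  | zero => simp
  | succ k ih =>
    push_cast
    rw [← add_assoc]
    exact (stirlingDefect_add_one_add_le (by linarith [k.cast_nonneg (α := ℝ)])).trans ih

lemma stirlingDefect_add_nat_ge {x : ℝ} (hx : 0 < x) {k : ℕ} (hk : k ≠ 0) :
    log (2 * π) / 2 - (x + 1) ^ 2 / k ≤ stirlingDefect (x + k) := by
  have hk0 : (0 : ℝ) < k := by positivity
  set w : ℝ := x + k with hw
  have hw0 : 0 < w := by positivity
  have hfeq : ∀ {y : ℝ}, 0 < y → (log ∘ Gamma) (y + 1) = (log ∘ Gamma) y + log y := fun hy => by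
    rw [Function.comp_apply, Gamma_add_one hy.ne', log_mul hy.ne' (Gamma_pos_of_pos hy).ne',
      add_comm, Function.comp_apply]
  have hmid : log (Gamma (w + 1)) ≤ log (Gamma (w + 1 / 2)) + log (w + 1 / 2) / 2 := by
    have h := convexOn_log_Gamma.2 (show w + 1 / 2 ∈ Set.Ioi 0 from by simp; positivity)
      (show w + 1 / 2 + 1 ∈ Set.Ioi 0 from by simp; positivity)
      (by norm_num : (0 : ℝ) ≤ 1 / 2) (by norm_num : (0 : ℝ) ≤ 1 / 2) (by norm_num)
    rw [hfeq (by positivity), smul_eq_mul, smul_eq_mul, smul_eq_mul, smul_eq_mul,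
      show 1 / 2 * (w + 1 / 2) + 1 / 2 * (w + 1 / 2 + 1) = w + 1 by ring] at h
    simp only [Function.comp_apply] at h
    linarith
  have hchord : log (k.factorial : ℝ) + x * log k ≤ log (Gamma (w + 1)) := by
    have h := BohrMollerup.f_add_nat_ge convexOn_log_Gamma hfeq (n := k + 1) (by omega) hx
    rw [Function.comp_apply, Function.comp_apply, Nat.cast_add_one, Gamma_nat_eq_factorial] at h
    rwa [add_sub_cancel_right, show (k : ℝ) + 1 + x = w + 1 by ring] at h
  have hstir := Stirling.le_log_factorial_stirling hk
  have hlog1 : log (w + 1 / 2) - log k ≤ (x + 1 / 2) / k := by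
    rw [← log_div (by positivity) hk0.ne']
    refine (log_le_sub_one_of_pos (by positivity)).trans (le_of_eq ?_)
    field_simp
    ring
  have hlog2 : w * log w ≤ x * log k + k * log k + x + x ^ 2 / k := by
    have h := mul_le_mul_of_nonneg_left (log_le_sub_one_of_pos (x := w / k) (by positivity)) hw0.le
    have e : w * (w / k - 1) = x + x ^ 2 / k := by rw [hw]; field_simp; ring
    rw [log_div hw0.ne' hk0.ne', mul_sub, e] at h
    linarith [show w * log k = x * log k + k * log k by rw [hw]; ring]
  have hconst : (x + 1) ^ 2 / k = x ^ 2 / k + (x + 1 / 2) / k / 2 + (3 * x / 2 + 3 / 4) / k := by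
    field_simp
    ring
  have : 0 ≤ (3 * x / 2 + 3 / 4) / k := by positivity
  unfold stirlingDefect
  linarith

lemma half_log_two_pi_le_stirlingDefect {x : ℝ} (hx : 1 ≤ x) :
    log (2 * π) / 2 ≤ stirlingDefect x + (24 * x - 6)⁻¹ := by
  have hbound : ∀ k : ℕ, k ≠ 0 →
      log (2 * π) / 2 - (x + 1) ^ 2 / k ≤ stirlingDefect x + (24 * x - 6)⁻¹ := fun k hk => by
    have : 0 ≤ (24 * (x + k) - 6)⁻¹ := inv_nonneg.2 (by linarith [k.cast_nonneg (α := ℝ)])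
    linarith [stirlingDefect_add_nat_ge (by linarith : 0 < x) hk,
      stirlingDefect_add_nat_add_le hx k]
  refine le_of_tendsto ?_ (Filter.eventually_atTop.2 ⟨1, fun k hk => hbound k (by omega)⟩)
  simpa using (tendsto_const_nhds (x := log (2 * π) / 2)).sub
    (tendsto_const_div_atTop_nhds_zero_nat ((x + 1) ^ 2))

lemma ten_div_nine_lt_log_pi : 10 / 9 < log π := by
  rw [lt_log_iff_exp_lt pi_pos, show (10 / 9 : ℝ) = 1 + 1 / 9 by norm_num, exp_add]
  have h : exp (1 / 9) ≤ 9 / 8 := by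
    have := add_one_le_exp (-1 / 9)
    rw [show (1 / 9 : ℝ) = -(-1 / 9) by norm_num, exp_neg, inv_le_comm₀ (exp_pos _) (by norm_num)]
    linarith
  calc exp 1 * exp (1 / 9) ≤ 2.7182818286 * (9 / 8) :=
        mul_le_mul exp_one_lt_d9.le h (exp_pos _).le (by norm_num)
    _ < 3.14 := by norm_num
    _ < π := pi_gt_d2

theorem sqrt_two_mul_exp_one_mul_rpow_lt_Gamma {x : ℝ} (hx : 1 ≤ x) :
    √(2 * exp 1) * (x / exp 1) ^ x < Gamma (x + 1 / 2) := by
  have hx0 : 0 < x := by linarith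
  rw [← log_lt_log_iff (by positivity) (Gamma_pos_of_pos (by positivity)),
    log_mul (by positivity) (by positivity), log_sqrt (by positivity),
    log_mul (by norm_num) (exp_pos _).ne', log_rpow (by positivity),
    log_div hx0.ne' (exp_pos _).ne', log_exp]
  have h := half_log_two_pi_le_stirlingDefect hx
  have : (24 * x - 6)⁻¹ ≤ 1 / 18 := by
    rw [inv_eq_one_div]; exact one_div_le_one_div_of_le (by norm_num) (by linarith)
  rw [stirlingDefect, log_mul (by norm_num) pi_pos.ne'] at h
  linarith [ten_div_nine_lt_log_pi]

lemma factorial_two_mul_mul_Gamma_le {ν : ℝ} (hν : -1 / 2 ≤ ν) (k : ℕ) :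
    ((2 * k).factorial : ℝ) * Gamma (ν + 1) ≤ 4 ^ k * k.factorial * Gamma (ν + k + 1) := by
  induction k with
  | zero => simp
  | succ k ih =>
    have hk : (0 : ℝ) ≤ k := k.cast_nonneg
    have hνk : 0 < ν + k + 1 := by linarith
    have hΓ : 0 < Gamma (ν + 1) := Gamma_pos_of_pos (by linarith)
    rw [show 2 * (k + 1) = 2 * k + 1 + 1 by ring, Nat.factorial_succ, Nat.factorial_succ,
      Nat.factorial_succ, Nat.cast_add_one, show ν + (k + 1 : ℝ) + 1 = (ν + k + 1) + 1 by ring,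
      Gamma_add_one (s := ν + k + 1) hνk.ne']
    push_cast
    have hstep : ((2 * k + 1 + 1) * (2 * k + 1) : ℝ) ≤ 4 * (k + 1) * (ν + k + 1) := by nlinarith
    calc ((2 * k + 1 + 1) * ((2 * k + 1) * (2 * k).factorial) : ℝ) * Gamma (ν + 1)
        = ((2 * k + 1 + 1) * (2 * k + 1)) * ((2 * k).factorial * Gamma (ν + 1)) := by ring
      _ ≤ (4 * (k + 1) * (ν + k + 1)) * (4 ^ k * k.factorial * Gamma (ν + k + 1)) :=
        mul_le_mul hstep ih (by positivity) (by positivity)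
      _ = _ := by ring

lemma besselI_term_le {ν z : ℝ} (hν : -1 / 2 ≤ ν) (hz : 0 < z) (k : ℕ) :
    1 / (k.factorial * Gamma (ν + k + 1)) * (z / 2) ^ (ν + 2 * (k : ℝ)) ≤
      (z / 2) ^ ν / Gamma (ν + 1) * (z ^ (2 * k) / (2 * k).factorial) := by
  have hΓ : 0 < Gamma (ν + k + 1) := Gamma_pos_of_pos (by linarith [k.cast_nonneg (α := ℝ)])
  have hΓ₀ : 0 < Gamma (ν + 1) := Gamma_pos_of_pos (by linarith)
  have hsplit : (z / 2) ^ (ν + 2 * (k : ℝ)) = (z / 2) ^ ν * z ^ (2 * k) / 4 ^ k := by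
    rw [rpow_add (by positivity), show 2 * (k : ℝ) = ((2 * k : ℕ) : ℝ) by push_cast; ring,
      rpow_natCast, div_pow, show (2 : ℝ) ^ (2 * k) = 4 ^ k by rw [pow_mul]; norm_num,
      mul_div_assoc]
  calc 1 / (k.factorial * Gamma (ν + k + 1)) * (z / 2) ^ (ν + 2 * (k : ℝ))
      = (z / 2) ^ ν * z ^ (2 * k) / (4 ^ k * k.factorial * Gamma (ν + k + 1)) := by
        rw [hsplit]; field_simp
    _ ≤ (z / 2) ^ ν * z ^ (2 * k) / ((2 * k).factorial * Gamma (ν + 1)) :=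
        div_le_div_of_nonneg_left (by positivity) (by positivity)
          (factorial_two_mul_mul_Gamma_le hν k)
    _ = (z / 2) ^ ν / Gamma (ν + 1) * (z ^ (2 * k) / (2 * k).factorial) := by
        field_simp

theorem besselI_le_rpow_mul_cosh_div_Gamma {ν z : ℝ} (hν : -1 / 2 ≤ ν) (hz : 0 < z) :
    besselI ν z ≤ (z / 2) ^ ν * cosh z / Gamma (ν + 1) := by
  have hΓ : ∀ k : ℕ, 0 < Gamma (ν + k + 1) := fun k =>
    Gamma_pos_of_pos (by linarith [k.cast_nonneg (α := ℝ)])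
  have hg := (hasSum_cosh z).mul_left ((z / 2) ^ ν / Gamma (ν + 1))
  have hterm := besselI_term_le hν hz
  have hsum := hg.summable.of_nonneg_of_le (fun k => by have := hΓ k; positivity) hterm
  calc besselI ν z ≤ (z / 2) ^ ν / Gamma (ν + 1) * cosh z := hasSum_le hterm hsum.hasSum hg
    _ = (z / 2) ^ ν * cosh z / Gamma (ν + 1) := by ring

theorem besselI_upper_bound (z ν : ℝ) (hz : 0 < z) (hν : 1/2 < ν) :
    besselI ν z <
      (z / 2) ^ ν * (1 / Real.sqrt (2 * Real.exp 1)) *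
        (Real.exp 1 / (ν + 1/2)) ^ (ν + 1/2) * ((Real.exp z + Real.exp (-z)) / 2) := by
  have hc : 0 < ν + 1 / 2 := by linarith
  have hΓ := sqrt_two_mul_exp_one_mul_rpow_lt_Gamma (by linarith : 1 ≤ ν + 1 / 2)
  rw [show ν + 1 / 2 + 1 / 2 = ν + 1 by ring] at hΓ
  calc besselI ν z ≤ (z / 2) ^ ν * cosh z / Gamma (ν + 1) :=
        besselI_le_rpow_mul_cosh_div_Gamma (by linarith) hz
    _ < (z / 2) ^ ν * cosh z / (√(2 * exp 1) * ((ν + 1 / 2) / exp 1) ^ (ν + 1 / 2)) :=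
        div_lt_div_of_pos_left (by positivity) (by positivity) hΓ
    _ = _ := by
        rw [cosh_eq, div_rpow hc.le (exp_pos 1).le, div_rpow (exp_pos 1).le hc.le]
        field_simp
end

section
/- For all real z > 0 and all real ν > 1/2, one has cosh(z)^{1/(2(ν+1))} < Γ(ν+1) · (2/z)^ν · I_ν(z) < cosh(z). -/
/-!
With `a = ν + 1`, the normalised function `Γ(ν + 1) (2/z)^ν I_ν(z)` is the series
`₀F₁(; a; z²/4) = ∑ (z²/4)^k / (k! (a)_k)`. Comparing the ratios `4 (k + 1) (a + k)` and
`(2k + 1) (2k + 2)` of consecutive denominators with those of `(2k)!` shows, for `a ≥ 1/2`,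
`z^(2k) / ((2a)^k (2k)!) ≤ (z²/4)^k / (k! (a)_k) ≤ z^(2k) / (2k)!`, strictly at `k = 1` on the right
when `a > 1/2`. Summing against the series of `cosh` gives `cosh (z / √(2a)) ≤ ₀F₁(; a; z²/4) < cosh z`.
The lower bound then follows from `a² log (cosh z) < log (cosh (a z))` for `0 < a < 1`: the
difference vanishes at `0` and its derivative is positive because `a tanh z < tanh (a z)`, which in
turn holds since `sinh (a x) cosh x - a cosh (a x) sinh x` has derivative `(1 - a²) sinh (a x) sinh x`.
-/

open Real Nat

lemma pos_of_hasDerivAt_pos {g g' : ℝ → ℝ} (hg : ∀ x, HasDerivAt g (g' x) x)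
    (hg' : ∀ x, 0 < x → 0 < g' x) (h0 : g 0 = 0) {z : ℝ} (hz : 0 < z) : 0 < g z := by
  have hmono : StrictMonoOn g (Set.Ici 0) := by
    refine strictMonoOn_of_deriv_pos (convex_Ici 0)
      (fun x _ ↦ (hg x).continuousAt.continuousWithinAt) fun x hx ↦ ?_
    rw [interior_Ici] at hx
    exact (hg x).deriv ▸ hg' x hx
  simpa [h0] using hmono Set.self_mem_Ici hz.le hz

lemma mul_cosh_mul_sinh_lt_sinh_mul_mul_cosh {a z : ℝ} (ha0 : 0 < a) (ha1 : a < 1) (hz : 0 < z) :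
    a * cosh (a * z) * sinh z < sinh (a * z) * cosh z := by
  have hderiv (x : ℝ) : HasDerivAt (fun x ↦ sinh (a * x) * cosh x - a * cosh (a * x) * sinh x)
      ((1 - a ^ 2) * (sinh (a * x) * sinh x)) x := by
    have hax : HasDerivAt (a * ·) a x := by simpa using (hasDerivAt_id x).const_mul a
    refine ((hax.sinh.mul (hasDerivAt_cosh x)).sub
      ((hax.cosh.const_mul a).mul (hasDerivAt_sinh x))).congr_deriv ?_
    ring
  have := pos_of_hasDerivAt_pos hderiv
    (fun x hx ↦ mul_pos (by nlinarith) (mul_pos (sinh_pos_iff.2 (by positivity)) (sinh_pos_iff.2 hx)))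
    (by simp) hz
  linarith

lemma sq_mul_log_cosh_lt_log_cosh_mul {a z : ℝ} (ha0 : 0 < a) (ha1 : a < 1) (hz : 0 < z) :
    a ^ 2 * log (cosh z) < log (cosh (a * z)) := by
  have hderiv (x : ℝ) : HasDerivAt (fun x ↦ log (cosh (a * x)) - a ^ 2 * log (cosh x))
      (a * (sinh (a * x) * cosh x - a * cosh (a * x) * sinh x) / (cosh (a * x) * cosh x)) x := by
    have hax : HasDerivAt (a * ·) a x := by simpa using (hasDerivAt_id x).const_mul a
    refine ((hax.cosh.log (cosh_pos _).ne').sub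
      (((hasDerivAt_cosh x).log (cosh_pos x).ne').const_mul (a ^ 2))).congr_deriv ?_
    field_simp [(cosh_pos (a * x)).ne', (cosh_pos x).ne']
  have := pos_of_hasDerivAt_pos hderiv (fun x hx ↦ by
      have := mul_cosh_mul_sinh_lt_sinh_mul_mul_cosh ha0 ha1 hx
      have := cosh_pos (a * x); have := cosh_pos x
      exact div_pos (mul_pos ha0 (by linarith)) (by positivity))
    (by simp) hz
  linarith

lemma cosh_rpow_inv_lt_cosh_div_sqrt {c z : ℝ} (hc : 1 < c) (hz : 0 < z) :
    cosh z ^ c⁻¹ < cosh (z / √c) := by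
  have hsqrt : 1 < √c := by simpa using Real.sqrt_lt_sqrt zero_le_one hc
  have key := sq_mul_log_cosh_lt_log_cosh_mul (inv_pos.2 (by linarith)) (inv_lt_one_of_one_lt₀ hsqrt) hz
  rw [inv_pow, sq_sqrt (by linarith), inv_mul_eq_div, inv_mul_eq_div] at key
  rw [rpow_def_of_pos (cosh_pos z), ← exp_log (cosh_pos (z / √c)), ← div_eq_mul_inv]
  exact exp_lt_exp.2 key

noncomputable def hypergeometric0F1 (a w : ℝ) : ℝ :=
  ∑' k : ℕ, w ^ k / (k ! * (ascPochhammer ℝ k).eval a)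

lemma Real.Gamma_add_nat_eq_mul_ascPochhammer {a : ℝ} (ha : 0 < a) (k : ℕ) :
    Gamma (a + k) = Gamma a * (ascPochhammer ℝ k).eval a := by
  induction k with
  | zero => simp
  | succ k ih =>
    rw [ascPochhammer_succ_eval, Nat.cast_succ, ← add_assoc, Gamma_add_one (by positivity), ih]
    ring

lemma gamma_mul_rpow_mul_besselI {ν z : ℝ} (hν : -1 < ν) (hz : 0 < z) :
    Gamma (ν + 1) * (2 / z) ^ ν * besselI ν z = hypergeometric0F1 (ν + 1) ((z / 2) ^ 2) := by
  rw [besselI, hypergeometric0F1, ← tsum_mul_left]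
  congr 1 with k
  have hG : 0 < Gamma (ν + 1) := Gamma_pos_of_pos (by linarith)
  have hP : 0 < (ascPochhammer ℝ k).eval (ν + 1) := ascPochhammer_pos k _ (by linarith)
  have hpow : (z / 2) ^ (ν + 2 * (k : ℝ)) = (z / 2) ^ ν * ((z / 2) ^ 2) ^ k := by
    rw [rpow_add (by positivity), ← pow_mul, ← rpow_natCast]
    push_cast
    ring_nf
  have hcancel : (2 / z) ^ ν * (z / 2) ^ ν = 1 := by
    rw [← mul_rpow (by positivity) (by positivity), show 2 / z * (z / 2) = 1 by field_simp, one_rpow]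
  rw [show ν + k + 1 = ν + 1 + k by ring, Gamma_add_nat_eq_mul_ascPochhammer (by linarith), hpow]
  field_simp
  exact hcancel

lemma cast_factorial_two_mul_succ (k : ℕ) :
    ((2 * (k + 1))! : ℝ) = (2 * k)! * ((2 * k + 1) * (2 * k + 2)) := by
  rw [show 2 * (k + 1) = 2 * k + 1 + 1 by ring, factorial_succ, factorial_succ]
  push_cast
  ring

lemma four_pow_mul_factorial_mul_ascPochhammer_succ (a : ℝ) (k : ℕ) :
    4 ^ (k + 1) * ((k + 1)! : ℝ) * (ascPochhammer ℝ (k + 1)).eval a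
      = 4 ^ k * k ! * (ascPochhammer ℝ k).eval a * (4 * (k + 1) * (a + k)) := by
  rw [pow_succ, factorial_succ, ascPochhammer_succ_eval]
  push_cast
  ring

lemma factorial_two_mul_le_four_pow_mul_factorial_mul_ascPochhammer {a : ℝ} (ha : 1 / 2 ≤ a)
    (k : ℕ) : ((2 * k)! : ℝ) ≤ 4 ^ k * k ! * (ascPochhammer ℝ k).eval a := by
  induction k with
  | zero => simp
  | succ k ih =>
    have := ascPochhammer_pos k a (by linarith)
    rw [cast_factorial_two_mul_succ, four_pow_mul_factorial_mul_ascPochhammer_succ]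
    exact mul_le_mul ih (by nlinarith) (by positivity) (by positivity)

lemma four_pow_mul_factorial_mul_ascPochhammer_le {a : ℝ} (ha : 1 / 2 ≤ a) (k : ℕ) :
    4 ^ k * k ! * (ascPochhammer ℝ k).eval a ≤ (2 * a) ^ k * (2 * k)! := by
  induction k with
  | zero => simp
  | succ k ih =>
    have := ascPochhammer_pos k a (by linarith)
    have hk : (0 : ℝ) ≤ k := k.cast_nonneg
    rw [cast_factorial_two_mul_succ, four_pow_mul_factorial_mul_ascPochhammer_succ]
    calc 4 ^ k * k ! * (ascPochhammer ℝ k).eval a * (4 * (k + 1) * (a + k))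
        ≤ (2 * a) ^ k * (2 * k)! * (2 * a * ((2 * k + 1) * (2 * k + 2))) :=
          mul_le_mul ih (by nlinarith [mul_nonneg hk (by linarith : (0 : ℝ) ≤ 2 * a - 1)])
            (by positivity) (by positivity)
      _ = (2 * a) ^ (k + 1) * ((2 * k)! * ((2 * k + 1) * (2 * k + 2))) := by ring

lemma hypergeometric0F1_term_eq (a z : ℝ) (k : ℕ) :
    ((z / 2) ^ 2) ^ k / (k ! * (ascPochhammer ℝ k).eval a)
      = z ^ (2 * k) / (4 ^ k * k ! * (ascPochhammer ℝ k).eval a) := by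
  rw [div_pow, div_pow, ← pow_mul, div_div, mul_assoc]
  norm_num

lemma hypergeometric0F1_term_le_cosh_term {a : ℝ} (ha : 1 / 2 ≤ a) (z : ℝ) (k : ℕ) :
    ((z / 2) ^ 2) ^ k / (k ! * (ascPochhammer ℝ k).eval a) ≤ z ^ (2 * k) / (2 * k)! := by
  have := ascPochhammer_pos k a (by linarith)
  rw [hypergeometric0F1_term_eq]
  exact div_le_div_of_nonneg_left ((even_two_mul k).pow_nonneg z) (by positivity)
    (factorial_two_mul_le_four_pow_mul_factorial_mul_ascPochhammer ha k)

lemma summable_hypergeometric0F1_term {a : ℝ} (ha : 1 / 2 ≤ a) (z : ℝ) :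
    Summable fun k : ℕ ↦ ((z / 2) ^ 2) ^ k / (k ! * (ascPochhammer ℝ k).eval a) :=
  (hasSum_cosh z).summable.of_nonneg_of_le
    (fun k ↦ by have := ascPochhammer_pos k a (by linarith); positivity)
    (hypergeometric0F1_term_le_cosh_term ha z)

lemma hypergeometric0F1_lt_cosh {a z : ℝ} (ha : 1 / 2 < a) (hz : z ≠ 0) :
    hypergeometric0F1 a ((z / 2) ^ 2) < cosh z := by
  rw [cosh_eq_tsum]
  refine Summable.tsum_lt_tsum (i := 1) (hypergeometric0F1_term_le_cosh_term ha.le z) ?_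
    (summable_hypergeometric0F1_term ha.le z) (hasSum_cosh z).summable
  have hz2 : 0 < z ^ 2 := by positivity
  suffices z ^ 2 / (4 * a) < z ^ 2 / 2 by norm_num [div_pow, div_div]; exact this
  exact div_lt_div_of_pos_left hz2 two_pos (by linarith)

lemma cosh_div_sqrt_le_hypergeometric0F1 {a : ℝ} (ha : 1 / 2 ≤ a) (z : ℝ) :
    cosh (z / √(2 * a)) ≤ hypergeometric0F1 a ((z / 2) ^ 2) := by
  rw [cosh_eq_tsum]
  refine (hasSum_cosh _).summable.tsum_le_tsum (fun k ↦ ?_) (summable_hypergeometric0F1_term ha z)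
  have := ascPochhammer_pos k a (by linarith)
  rw [hypergeometric0F1_term_eq, div_pow, pow_mul √(2 * a), sq_sqrt (by linarith), div_div]
  exact div_le_div_of_nonneg_left ((even_two_mul k).pow_nonneg z) (by positivity)
    (four_pow_mul_factorial_mul_ascPochhammer_le ha k)

theorem besselI_ifantis_bounds (z ν : ℝ) (hz : 0 < z) (hν : 1/2 < ν) :
    Real.cosh z ^ (1 / (2 * (ν + 1))) < Real.Gamma (ν + 1) * (2 / z) ^ ν * besselI ν z ∧
      Real.Gamma (ν + 1) * (2 / z) ^ ν * besselI ν z < Real.cosh z := by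
  have ha : 1 / 2 < ν + 1 := by linarith
  rw [gamma_mul_rpow_mul_besselI (by linarith) hz]
  refine ⟨?_, hypergeometric0F1_lt_cosh ha hz.ne'⟩
  calc cosh z ^ (1 / (2 * (ν + 1))) < cosh (z / √(2 * (ν + 1))) := by
        rw [one_div]
        exact cosh_rpow_inv_lt_cosh_div_sqrt (by linarith) hz
    _ ≤ hypergeometric0F1 (ν + 1) ((z / 2) ^ 2) := cosh_div_sqrt_le_hypergeometric0F1 ha.le z
end

section
/- For every fixed real ν ≥ 0, one has I_ν(z) ~ e^z/√(2πz) as z → ∞; that is, the ratio I_ν(z) · √(2πz) · e^{−z} tends to 1 as z tends to infinity. -/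
open MeasureTheory Real Set Filter Topology
open scoped Nat

lemma ofReal_rpow_mul_one_sub_rpow {x : ℝ} (hx : x ∈ Icc (0 : ℝ) 1) (a b : ℝ) :
    ((x ^ (a - 1) * (1 - x) ^ (b - 1) : ℝ) : ℂ)
      = (x : ℂ) ^ ((a : ℂ) - 1) * (1 - (x : ℂ)) ^ ((b : ℂ) - 1) := by
  rw [Complex.ofReal_mul, Complex.ofReal_cpow hx.1, Complex.ofReal_cpow (sub_nonneg.2 hx.2)]
  push_cast
  rfl

lemma intervalIntegrable_rpow_mul_one_sub_rpow {a b : ℝ} (ha : 0 < a) (hb : 0 < b) :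
    IntervalIntegrable (fun x : ℝ => x ^ (a - 1) * (1 - x) ^ (b - 1)) volume 0 1 := by
  refine (Complex.betaIntegral_convergent (u := a) (v := b) (by simpa) (by simpa)).norm.congr ?_
  intro x hx
  rw [uIoc_of_le zero_le_one] at hx
  have hx' : x ∈ Icc (0 : ℝ) 1 := Ioc_subset_Icc_self hx
  simp only
  rw [← ofReal_rpow_mul_one_sub_rpow hx', Complex.norm_real, norm_of_nonneg
    (mul_nonneg (rpow_nonneg hx'.1 _) (rpow_nonneg (sub_nonneg.2 hx'.2) _))]

lemma integral_rpow_mul_one_sub_rpow {a b : ℝ} (ha : 0 < a) (hb : 0 < b) :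
    ∫ x in (0 : ℝ)..1, x ^ (a - 1) * (1 - x) ^ (b - 1)
      = Gamma a * Gamma b / Gamma (a + b) := by
  have h := Complex.betaIntegral_eq_Gamma_mul_div (u := a) (v := b) (by simpa) (by simpa)
  apply Complex.ofReal_injective
  rw [← intervalIntegral.integral_ofReal, Complex.ofReal_div, Complex.ofReal_mul,
    ← Complex.Gamma_ofReal, ← Complex.Gamma_ofReal, ← Complex.Gamma_ofReal, Complex.ofReal_add,
    ← h, Complex.betaIntegral]
  refine intervalIntegral.integral_congr fun x hx => ?_
  rw [uIcc_of_le zero_le_one] at hx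
  exact ofReal_rpow_mul_one_sub_rpow hx a b

lemma integrableOn_rpow_mul_one_sub_rpow {a b : ℝ} (ha : 0 < a) (hb : 0 < b) :
    IntegrableOn (fun x : ℝ => x ^ (a - 1) * (1 - x) ^ (b - 1)) (Ioo 0 1) :=
  (intervalIntegrable_iff_integrableOn_Ioo_of_le zero_le_one).1
    (intervalIntegrable_rpow_mul_one_sub_rpow ha hb)

lemma setIntegral_rpow_mul_one_sub_rpow {a b : ℝ} (ha : 0 < a) (hb : 0 < b) :
    ∫ x in Ioo (0 : ℝ) 1, x ^ (a - 1) * (1 - x) ^ (b - 1)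
      = Gamma a * Gamma b / Gamma (a + b) := by
  rw [← integral_Ioc_eq_integral_Ioo, ← intervalIntegral.integral_of_le zero_le_one,
    integral_rpow_mul_one_sub_rpow ha hb]

lemma Gamma_nat_add_half_eq_factorial (k : ℕ) :
    Gamma (k + 1 / 2) = √π * (2 * k)! / (4 ^ k * k !) := by
  induction k with
  | zero => simpa using Gamma_one_half_eq
  | succ k ih =>
    rw [Nat.cast_succ, add_right_comm, Gamma_add_one (by positivity), ih, Nat.factorial_succ,
      show 2 * (k + 1) = 2 * k + 1 + 1 by ring, Nat.factorial_succ, Nat.factorial_succ]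
    push_cast
    field_simp
    ring

lemma cosh_mul_sqrt_mul_rpow_eq_tsum {x : ℝ} (hx : 0 < x) (z : ℝ) :
    cosh (z * √x) * x ^ (-(1 / 2) : ℝ)
      = ∑' k : ℕ, z ^ (2 * k) / (2 * k)! * x ^ ((k : ℝ) + 1 / 2 - 1) := by
  rw [cosh_eq_tsum, ← tsum_mul_right]
  refine tsum_congr fun k => ?_
  rw [show (k : ℝ) + 1 / 2 - 1 = k + -(1 / 2) by ring, rpow_add hx, rpow_natCast, mul_pow,
    pow_mul √x, sq_sqrt hx.le]
  ring

lemma besselI_term_eq {ν z : ℝ} (hν : -(1 / 2) < ν) (hz : 0 < z) (k : ℕ) :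
    1 / (k ! * Gamma (ν + k + 1)) * (z / 2) ^ (ν + 2 * (k : ℝ))
      = (z / 2) ^ ν / (√π * Gamma (ν + 1 / 2))
        * (z ^ (2 * k) / (2 * k)!
          * (Gamma (k + 1 / 2) * Gamma (ν + 1 / 2) / Gamma (ν + k + 1))) := by
  have : 0 < Gamma (ν + 1 / 2) := Gamma_pos_of_pos (by linarith)
  generalize Gamma (ν + 1 / 2) = g at *
  have : 0 < Gamma (ν + k + 1) := Gamma_pos_of_pos (by linarith [k.cast_nonneg (α := ℝ)])
  rw [show ν + 2 * (k : ℝ) = ν + (2 * k : ℕ) by push_cast; ring, rpow_add (by positivity),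
    rpow_natCast, div_pow, pow_mul 2, show (2 : ℝ) ^ 2 = 4 by norm_num,
    Gamma_nat_add_half_eq_factorial]
  field_simp

theorem besselI_eq_setIntegral_cosh_mul_sqrt {ν z : ℝ} (hν : -(1 / 2) < ν) (hz : 0 < z) :
    besselI ν z = (z / 2) ^ ν / (√π * Gamma (ν + 1 / 2))
      * ∫ x in Ioo (0 : ℝ) 1, cosh (z * √x) * x ^ (-(1 / 2) : ℝ) * (1 - x) ^ (ν - 1 / 2) := by
  have hb : 0 < ν + 1 / 2 := by linarith
  set c : ℕ → ℝ := fun k => z ^ (2 * k) / (2 * k)!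
  set β : ℕ → ℝ → ℝ := fun k x => x ^ ((k : ℝ) + 1 / 2 - 1) * (1 - x) ^ (ν + 1 / 2 - 1)
  have hβ_int (k : ℕ) : IntegrableOn (β k) (Ioo 0 1) :=
    integrableOn_rpow_mul_one_sub_rpow (by positivity) hb
  have hnorm_le (k : ℕ) :
      ∫ x in Ioo (0 : ℝ) 1, ‖c k * β k x‖ ≤ c k * ∫ x in Ioo (0 : ℝ) 1, β 0 x := by
    rw [← integral_const_mul]
    refine setIntegral_mono_on ((hβ_int k).const_mul _).norm ((hβ_int 0).const_mul _)
      measurableSet_Ioo fun x hx => ?_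
    have hβ_le : β k x ≤ β 0 x := by
      refine mul_le_mul_of_nonneg_right (rpow_le_rpow_of_exponent_ge hx.1 hx.2.le ?_)
        (rpow_nonneg (by linarith [hx.2]) _)
      simp
    rw [norm_of_nonneg (mul_nonneg (by positivity) (mul_nonneg (rpow_nonneg hx.1.le _)
      (rpow_nonneg (by linarith [hx.2]) _)))]
    exact mul_le_mul_of_nonneg_left hβ_le (by positivity)
  have hsum : Summable fun k => ∫ x in Ioo (0 : ℝ) 1, ‖c k * β k x‖ :=
    .of_nonneg_of_le (fun k => integral_nonneg fun x => norm_nonneg _) hnorm_le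
      (((summable_pow_div_factorial z).comp_injective
        (fun m n h => by simpa using h)).mul_right _)
  rw [setIntegral_congr_fun measurableSet_Ioo (g := fun x => ∑' k, c k * β k x) fun x hx => by
      simp only [c, β, show ν + 1 / 2 - 1 = ν - 1 / 2 by ring, ← tsum_mul_right,
        cosh_mul_sqrt_mul_rpow_eq_tsum hx.1, mul_assoc],
    ← integral_tsum_of_summable_integral_norm (fun k => (hβ_int k).const_mul _) hsum,
    ← tsum_mul_left, besselI]
  refine tsum_congr fun k => ?_
  rw [integral_const_mul, setIntegral_rpow_mul_one_sub_rpow (by positivity) hb,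
    besselI_term_eq hν hz, show (k : ℝ) + 1 / 2 + (ν + 1 / 2) = ν + k + 1 by ring]

lemma setIntegral_Ioo_zero_one_eq_integral_comp_sq (g : ℝ → ℝ) :
    ∫ x in Ioo (0 : ℝ) 1, g x = ∫ t in Ioo (0 : ℝ) 1, 2 * t * g (t ^ 2) := by
  have himage : (fun t : ℝ => t ^ 2) '' Ioo 0 1 = Ioo 0 1 := by
    ext x
    constructor
    · rintro ⟨t, ⟨ht0, ht1⟩, rfl⟩
      exact ⟨by positivity, by nlinarith⟩
    · rintro ⟨hx0, hx1⟩
      exact ⟨√x, ⟨sqrt_pos.2 hx0, (sqrt_lt' one_pos).2 (by simpa using hx1)⟩, sq_sqrt hx0.le⟩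
  conv_lhs => rw [← himage]
  rw [integral_image_eq_integral_abs_deriv_smul measurableSet_Ioo
    (fun t _ => (hasDerivAt_pow 2 t).hasDerivWithinAt)
    ((pow_left_strictMonoOn₀ two_ne_zero).mono fun t ht => ht.1.le).injOn]
  refine setIntegral_congr_fun measurableSet_Ioo fun t ht => ?_
  simp [abs_of_pos ht.1]

theorem besselI_eq_integral_cosh {ν z : ℝ} (hν : -(1 / 2) < ν) (hz : 0 < z) :
    besselI ν z = (z / 2) ^ ν / (√π * Gamma (ν + 1 / 2))
      * ∫ t in (0 : ℝ)..1, 2 * cosh (z * t) * (1 - t ^ 2) ^ (ν - 1 / 2) := by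
  rw [besselI_eq_setIntegral_cosh_mul_sqrt hν hz, setIntegral_Ioo_zero_one_eq_integral_comp_sq,
    intervalIntegral.integral_of_le zero_le_one, integral_Ioc_eq_integral_Ioo]
  congr 1
  refine setIntegral_congr_fun measurableSet_Ioo fun t ht => ?_
  have ht0 : 0 < t := ht.1
  have hpow : (t ^ 2) ^ (-(1 / 2) : ℝ) = t⁻¹ := by
    rw [← rpow_natCast, ← rpow_mul ht0.le, show ((2 : ℕ) : ℝ) * -(1 / 2) = -1 by norm_num,
      rpow_neg_one]
  rw [sqrt_sq ht0.le, hpow]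
  field_simp

lemma intervalIntegrable_one_sub_sq_rpow {s : ℝ} (hs : -1 < s) :
    IntervalIntegrable (fun t : ℝ => (1 - t ^ 2) ^ s) volume 0 1 := by
  have h := (intervalIntegral.intervalIntegrable_rpow' hs (a := 0) (b := 1)).comp_sub_left 1
  rw [sub_zero, sub_self] at h
  refine (h.symm.mul_continuousOn (g := fun t => (1 + t) ^ s) fun t ht => ?_).congr fun t ht => ?_
  · rw [uIcc_of_le zero_le_one] at ht
    exact (ContinuousAt.rpow_const (by fun_prop) (Or.inl (by linarith [ht.1])))
      |>.continuousWithinAt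
  · rw [uIoc_of_le zero_le_one] at ht
    rw [← mul_rpow (by linarith [ht.2]) (by linarith [ht.1])]
    ring_nf

lemma intervalIntegrable_exp_mul_one_sub_sq_rpow {s : ℝ} (hs : -1 < s) (c : ℝ) :
    IntervalIntegrable (fun t : ℝ => exp (c * t) * (1 - t ^ 2) ^ s) volume 0 1 :=
  (intervalIntegrable_one_sub_sq_rpow hs).continuousOn_mul (by fun_prop)

lemma rpow_le_rpow_add_one {x b s : ℝ} (h1 : 1 ≤ x) (h2 : x ≤ b) : x ^ s ≤ b ^ s + 1 := by
  rcases le_or_gt 0 s with hs | hs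
  · linarith [rpow_le_rpow (by linarith) h2 hs, rpow_nonneg (by linarith : (0 : ℝ) ≤ b) s]
  · linarith [rpow_le_one_of_one_le_of_nonpos h1 hs.le,
      rpow_nonneg (by linarith : (0 : ℝ) ≤ b) s]

lemma tendsto_integral_exp_neg_mul_rpow_mul_two_sub_div_rpow {s : ℝ} (hs : -1 < s) :
    Tendsto (fun z : ℝ => ∫ u in (0 : ℝ)..z, exp (-u) * u ^ s * (2 - u / z) ^ s) atTop
      (𝓝 (2 ^ s * Gamma (s + 1))) := by
  have hΓ : IntegrableOn (fun u : ℝ => exp (-u) * u ^ s) (Ioi 0) := by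
    simpa using GammaIntegral_convergent (s := s + 1) (by linarith)
  have hintegral : ∫ u in Ioi (0 : ℝ), exp (-u) * u ^ s * 2 ^ s = 2 ^ s * Gamma (s + 1) := by
    rw [integral_mul_const, Gamma_eq_integral (by linarith), add_sub_cancel_right, mul_comm]
  rw [← hintegral]
  refine (tendsto_integral_filter_of_dominated_convergence
    (F := fun z u => (Iic z).indicator (fun u => exp (-u) * u ^ s * (2 - u / z) ^ s) u)
    (fun u => (2 ^ s + 1) * (exp (-u) * u ^ s)) ?_ ?_ (hΓ.const_mul _) ?_).congr' ?_
  · exact .of_forall fun z =>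
      (Measurable.indicator (by fun_prop) measurableSet_Iic).aestronglyMeasurable
  · refine .of_forall fun z => (ae_restrict_iff' measurableSet_Ioi).2 (.of_forall fun u hu => ?_)
    have hu : 0 < u := hu
    by_cases huz : u ≤ z
    · have hz : 0 < z := hu.trans_le huz
      have hq : u / z ≤ 1 := (div_le_one hz).2 huz
      have hbase : (2 - u / z) ^ s ≤ 2 ^ s + 1 :=
        rpow_le_rpow_add_one (by linarith) (by linarith [div_pos hu hz])
      rw [indicator_of_mem (show u ∈ Iic z from huz),
        norm_of_nonneg (mul_nonneg (by positivity) (rpow_nonneg (by linarith) _))]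
      nlinarith [(by positivity : 0 ≤ exp (-u) * u ^ s)]
    · rw [indicator_of_notMem (show u ∉ Iic z from huz), norm_zero]
      positivity
  · refine (ae_restrict_iff' measurableSet_Ioi).2 (.of_forall fun u hu => ?_)
    refine Tendsto.congr' (f₁ := fun z => exp (-u) * u ^ s * (2 - u / z) ^ s)
      ((eventually_ge_atTop u).mono fun z hz => by
        simp [indicator_of_mem (show u ∈ Iic z from hz)]) ?_
    refine tendsto_const_nhds.mul (Tendsto.rpow_const ?_ (Or.inl two_ne_zero))
    simpa using tendsto_const_nhds.sub (tendsto_const_nhds.div_atTop (tendsto_id (α := ℝ)))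
  · filter_upwards [eventually_ge_atTop 0] with z hz
    rw [setIntegral_indicator measurableSet_Iic, Ioi_inter_Iic, intervalIntegral.integral_of_le hz]

lemma rpow_add_one_mul_exp_neg_mul_integral_exp_mul {s z : ℝ} (hz : 0 < z) :
    z ^ (s + 1) * exp (-z) * ∫ t in (0 : ℝ)..1, exp (z * t) * (1 - t ^ 2) ^ s
      = ∫ u in (0 : ℝ)..z, exp (-u) * u ^ s * (2 - u / z) ^ s := by
  have hsubst := intervalIntegral.integral_comp_sub_div
    (f := fun t => exp (z * t) * (1 - t ^ 2) ^ s) (a := 0) (b := z) hz.ne' 1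
  rw [div_self hz.ne', zero_div, sub_self, sub_zero, smul_eq_mul] at hsubst
  calc z ^ (s + 1) * exp (-z) * ∫ t in (0 : ℝ)..1, exp (z * t) * (1 - t ^ 2) ^ s
      = z ^ s * exp (-z) * (z * ∫ t in (0 : ℝ)..1, exp (z * t) * (1 - t ^ 2) ^ s) := by
        rw [rpow_add_one hz.ne']; ring
    _ = ∫ u in (0 : ℝ)..z,
          z ^ s * exp (-z) * (exp (z * (1 - u / z)) * (1 - (1 - u / z) ^ 2) ^ s) := by
        rw [← hsubst, intervalIntegral.integral_const_mul]
    _ = _ := by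
        refine intervalIntegral.integral_congr fun u hu => ?_
        rw [uIcc_of_le hz.le] at hu
        have hq : u / z ≤ 1 := (div_le_one hz).2 hu.2
        have hsq : 1 - (1 - u / z) ^ 2 = u / z * (2 - u / z) := by ring
        have hexp : exp (-z) * exp (z * (1 - u / z)) = exp (-u) := by
          rw [← exp_add]; congr 1; field_simp; ring
        rw [hsq, mul_rpow (div_nonneg hu.1 hz.le) (by linarith), div_rpow hu.1 hz.le]
        have hzs : z ^ s * (u ^ s / z ^ s) = u ^ s :=
          mul_div_cancel₀ _ (rpow_pos_of_pos hz s).ne'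
        linear_combination (exp (-z) * exp (z * (1 - u / z)) * (2 - u / z) ^ s) * hzs
          + (u ^ s * (2 - u / z) ^ s) * hexp

lemma tendsto_rpow_add_one_mul_exp_neg_mul_integral_exp_mul {s : ℝ} (hs : -1 < s) :
    Tendsto (fun z : ℝ =>
        z ^ (s + 1) * exp (-z) * ∫ t in (0 : ℝ)..1, exp (z * t) * (1 - t ^ 2) ^ s)
      atTop (𝓝 (2 ^ s * Gamma (s + 1))) :=
  (tendsto_integral_exp_neg_mul_rpow_mul_two_sub_div_rpow hs).congr' <|
    (eventually_gt_atTop 0).mono fun _ hz =>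
      (rpow_add_one_mul_exp_neg_mul_integral_exp_mul hz).symm

lemma tendsto_rpow_add_one_mul_exp_neg_mul_integral_exp_neg_mul {s : ℝ} (hs : -1 < s) :
    Tendsto (fun z : ℝ =>
        z ^ (s + 1) * exp (-z) * ∫ t in (0 : ℝ)..1, exp (-z * t) * (1 - t ^ 2) ^ s)
      atTop (𝓝 0) := by
  refine Tendsto.zero_mul_isBoundedUnder_le
    (by simpa using tendsto_rpow_mul_exp_neg_mul_atTop_nhds_zero (s + 1) 1 one_pos) ?_
  refine isBoundedUnder_of_eventually_le (a := ∫ t in (0 : ℝ)..1, (1 - t ^ 2) ^ s) ?_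
  filter_upwards [eventually_ge_atTop 0] with z hz
  refine intervalIntegral.norm_integral_le_of_norm_le zero_le_one (.of_forall fun t ht => ?_)
    (intervalIntegrable_one_sub_sq_rpow hs)
  have hw : 0 ≤ (1 - t ^ 2) ^ s := rpow_nonneg (by nlinarith [ht.1, ht.2]) s
  rw [norm_mul, norm_of_nonneg hw, norm_of_nonneg (exp_pos _).le]
  exact mul_le_of_le_one_left hw (exp_le_one_iff.2 (by nlinarith [ht.1]))

lemma besselI_mul_sqrt_two_pi_mul {ν z : ℝ} (hν : -(1 / 2) < ν) (hz : 0 < z) :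
    besselI ν z * √(2 * π * z) = 2 ^ (1 / 2 - ν) / Gamma (ν + 1 / 2) * z ^ (ν + 1 / 2)
      * ((∫ t in (0 : ℝ)..1, exp (z * t) * (1 - t ^ 2) ^ (ν - 1 / 2))
        + ∫ t in (0 : ℝ)..1, exp (-z * t) * (1 - t ^ 2) ^ (ν - 1 / 2)) := by
  have hs : -1 < ν - 1 / 2 := by linarith
  have hcosh : ∫ t in (0 : ℝ)..1, 2 * cosh (z * t) * (1 - t ^ 2) ^ (ν - 1 / 2)
      = (∫ t in (0 : ℝ)..1, exp (z * t) * (1 - t ^ 2) ^ (ν - 1 / 2))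
        + ∫ t in (0 : ℝ)..1, exp (-z * t) * (1 - t ^ 2) ^ (ν - 1 / 2) := by
    rw [← intervalIntegral.integral_add (intervalIntegrable_exp_mul_one_sub_sq_rpow hs z)
      (intervalIntegrable_exp_mul_one_sub_sq_rpow hs (-z))]
    refine intervalIntegral.integral_congr fun t _ => ?_
    simp only [cosh_eq, neg_mul]
    ring
  have hsqrt : √(2 * π * z) = 2 ^ (1 / 2 : ℝ) * √π * z ^ (1 / 2 : ℝ) := by
    rw [sqrt_mul (by positivity), sqrt_mul (by norm_num), sqrt_eq_rpow 2, sqrt_eq_rpow z]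
  have hΓ : Gamma (ν + 1 / 2) ≠ 0 := (Gamma_pos_of_pos (by linarith)).ne'
  rw [besselI_eq_integral_cosh hν hz, hcosh, hsqrt, div_rpow hz.le zero_le_two, rpow_add hz,
    rpow_sub two_pos]
  field_simp

theorem besselI_asymptotic (ν : ℝ) (hν : 0 ≤ ν) :
    Filter.Tendsto (fun z : ℝ => besselI ν z * Real.sqrt (2 * Real.pi * z) * Real.exp (-z))
      Filter.atTop (nhds 1) := by
  have hs : -1 < ν - 1 / 2 := by linarith
  have hlim := ((tendsto_rpow_add_one_mul_exp_neg_mul_integral_exp_mul hs).add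
    (tendsto_rpow_add_one_mul_exp_neg_mul_integral_exp_neg_mul hs)).const_mul
    (2 ^ (1 / 2 - ν) / Gamma (ν + 1 / 2))
  have hone :
      2 ^ (1 / 2 - ν) / Gamma (ν + 1 / 2) * (2 ^ (ν - 1 / 2) * Gamma (ν - 1 / 2 + 1) + 0) = 1 := by
    have hΓ : Gamma (ν + 1 / 2) ≠ 0 := (Gamma_pos_of_pos (by linarith)).ne'
    rw [add_zero, show ν - 1 / 2 + 1 = ν + 1 / 2 by ring, div_mul_comm,
      mul_div_cancel_right₀ _ hΓ, ← rpow_add two_pos, sub_add_sub_cancel', sub_self, rpow_zero]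
  rw [hone, show ν - 1 / 2 + 1 = ν + 1 / 2 by ring] at hlim
  refine hlim.congr' ((eventually_gt_atTop 0).mono fun z hz => ?_)
  dsimp only
  rw [besselI_mul_sqrt_two_pi_mul (by linarith) hz]
  ring
end

section
/- Let d ≥ 2 be a real number and define the log-normalizing-constant function f(κ) = (d/2 − 1)·log(κ) − log(I_{d/2−1}(κ)) for κ > 0 (so that the vMF normalizer is C_d(κ) = e^{f(κ)}/(2π)^{d/2}). Then f is differentiable on (0, ∞) and f'(κ) = −I_{d/2}(κ)/I_{d/2−1}(κ). -/
open Real Filter Topology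

section PowerSeries

variable {𝕜 : Type*} [RCLike 𝕜] {a : ℕ → 𝕜}

theorem summable_mul_pow_of_summable_norm_mul_pow
    (ha : ∀ r : ℝ, Summable fun k => ‖a k‖ * r ^ k) (x : 𝕜) :
    Summable fun k => a k * x ^ k :=
  (ha ‖x‖).of_norm_bounded fun k => by rw [norm_mul, norm_pow]

theorem hasDerivAt_tsum_mul_pow (ha : ∀ r : ℝ, Summable fun k => ‖a k‖ * r ^ k) (y : 𝕜) :
    HasDerivAt (fun x => ∑' k, a k * x ^ k) (∑' k : ℕ, ((k : 𝕜) + 1) * a (k + 1) * y ^ k) y := by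
  -- With `R ≥ 1`, the derivative series on the ball of radius `R` is dominated by the
  -- series at radius `2 * R`, since `k * ‖x‖ ^ (k - 1) ≤ 2 ^ k * R ^ k`.
  set R := ‖y‖ + 1
  have hR : 1 ≤ R := by simp [R]
  have hbound : ∀ k (x : 𝕜), ‖x‖ < R → ‖a k * (k * x ^ (k - 1))‖ ≤ ‖a k‖ * (2 * R) ^ k := by
    intro k x hx
    have hk : (k : ℝ) ≤ 2 ^ k := by exact_mod_cast Nat.lt_two_pow_self.le
    calc ‖a k * (k * x ^ (k - 1))‖ = ‖a k‖ * (k * ‖x‖ ^ (k - 1)) := by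
          rw [norm_mul, norm_mul, norm_pow, RCLike.norm_natCast]
      _ ≤ ‖a k‖ * (2 ^ k * R ^ k) := by
          gcongr
          exact (pow_le_pow_left₀ (norm_nonneg x) hx.le _).trans
            (pow_le_pow_right₀ hR (Nat.sub_le k 1))
      _ = ‖a k‖ * (2 * R) ^ k := by rw [mul_pow]
  have hy : y ∈ Metric.ball (0 : 𝕜) R := by simp [R]
  have hderiv := hasDerivAt_tsum_of_isPreconnected (ha (2 * R)) Metric.isOpen_ball
    (convex_ball (0 : 𝕜) R).isPreconnected (fun k x _ => (hasDerivAt_pow k x).const_mul (a k))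
    (fun k x hx => hbound k x (mem_ball_zero_iff.mp hx)) (Metric.mem_ball_self (by linarith))
    (summable_mul_pow_of_summable_norm_mul_pow ha 0) hy
  have hsum : Summable fun k => a k * (k * y ^ (k - 1)) :=
    (ha (2 * R)).of_norm_bounded fun k => hbound k y (mem_ball_zero_iff.mp hy)
  refine hderiv.congr_deriv ?_
  rw [hsum.tsum_eq_zero_add]
  simp only [Nat.cast_zero, zero_mul, mul_zero, zero_add, Nat.add_sub_cancel, Nat.cast_add,
    Nat.cast_one]
  exact tsum_congr fun k => by ring

end PowerSeries

theorem Real.Gamma_le_Gamma_add_nat {s : ℝ} (hs : 1 ≤ s) (k : ℕ) : Gamma s ≤ Gamma (s + k) := by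
  induction k with
  | zero => simp
  | succ k ih =>
    have hpos : 0 < Gamma (s + k) := Gamma_pos_of_pos (by positivity)
    rw [Nat.cast_succ, ← add_assoc, Gamma_add_one (by positivity)]
    nlinarith [(le_add_of_nonneg_right (Nat.cast_nonneg k) : s ≤ s + k)]

noncomputable def besselCoeff (ν : ℝ) (k : ℕ) : ℝ :=
  1 / (k.factorial * Gamma (ν + (k : ℝ) + 1))

noncomputable def besselSeries (ν y : ℝ) : ℝ :=
  ∑' k : ℕ, besselCoeff ν k * y ^ k

theorem besselCoeff_pos {ν : ℝ} (hν : -1 < ν) (k : ℕ) : 0 < besselCoeff ν k := by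
  have : 0 < Gamma (ν + k + 1) := Gamma_pos_of_pos (by linarith [(k.cast_nonneg : (0 : ℝ) ≤ k)])
  unfold besselCoeff
  positivity

theorem succ_mul_besselCoeff_succ (ν : ℝ) (k : ℕ) :
    ((k : ℝ) + 1) * besselCoeff ν (k + 1) = besselCoeff (ν + 1) k := by
  rw [besselCoeff, besselCoeff, Nat.factorial_succ]
  push_cast
  rw [show ν + (k + 1) + 1 = ν + 1 + k + 1 by ring]
  field_simp

theorem summable_norm_besselCoeff_mul_pow {ν : ℝ} (hν : 0 ≤ ν) (r : ℝ) :
    Summable fun k => ‖besselCoeff ν k‖ * r ^ k := by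
  refine ((summable_pow_div_factorial |r|).mul_left (Gamma (ν + 1))⁻¹).of_norm_bounded
    fun k => ?_
  have hΓ : 0 < Gamma (ν + 1) := Gamma_pos_of_pos (by linarith)
  have hle : Gamma (ν + 1) ≤ Gamma (ν + k + 1) := by
    simpa only [add_right_comm] using Gamma_le_Gamma_add_nat (s := ν + 1) (by linarith) k
  rw [norm_mul, norm_norm, norm_pow, norm_eq_abs r,
    norm_of_nonneg (besselCoeff_pos (by linarith) k).le, besselCoeff, one_div, mul_inv,
    div_eq_mul_inv]
  calc (k.factorial : ℝ)⁻¹ * (Gamma (ν + k + 1))⁻¹ * |r| ^ k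
      ≤ (k.factorial : ℝ)⁻¹ * (Gamma (ν + 1))⁻¹ * |r| ^ k := by gcongr
    _ = (Gamma (ν + 1))⁻¹ * (|r| ^ k * (k.factorial : ℝ)⁻¹) := by ring

theorem summable_besselCoeff_mul_pow {ν : ℝ} (hν : 0 ≤ ν) (y : ℝ) :
    Summable fun k => besselCoeff ν k * y ^ k :=
  summable_mul_pow_of_summable_norm_mul_pow (summable_norm_besselCoeff_mul_pow hν) y

theorem besselSeries_pos {ν y : ℝ} (hν : 0 ≤ ν) (hy : 0 ≤ y) : 0 < besselSeries ν y :=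
  (summable_besselCoeff_mul_pow hν y).tsum_pos
    (fun k => mul_nonneg (besselCoeff_pos (by linarith) k).le (pow_nonneg hy k)) 0
    (by simpa using besselCoeff_pos (by linarith) 0)

theorem hasDerivAt_besselSeries {ν : ℝ} (hν : 0 ≤ ν) (y : ℝ) :
    HasDerivAt (besselSeries ν) (besselSeries (ν + 1) y) y := by
  have h := hasDerivAt_tsum_mul_pow (summable_norm_besselCoeff_mul_pow hν) y
  simp only [succ_mul_besselCoeff_succ] at h
  exact h

theorem besselI_eq_rpow_mul_besselSeries (ν : ℝ) {z : ℝ} (hz : 0 < z) :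
    besselI ν z = (z / 2) ^ ν * besselSeries ν ((z / 2) ^ 2) := by
  rw [besselSeries, ← tsum_mul_left]
  refine tsum_congr fun k => ?_
  rw [rpow_add (by positivity), show (2 : ℝ) * k = ((2 * k : ℕ) : ℝ) by push_cast; ring,
    rpow_natCast, pow_mul, besselCoeff]
  ring

theorem mul_log_sub_log_besselI {ν t : ℝ} (hν : 0 ≤ ν) (ht : 0 < t) :
    ν * log t - log (besselI ν t) = ν * log 2 - log (besselSeries ν ((t / 2) ^ 2)) := by
  rw [besselI_eq_rpow_mul_besselSeries ν ht,
    log_mul (by positivity) (besselSeries_pos hν (by positivity)).ne', log_rpow (by positivity),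
    log_div ht.ne' two_ne_zero]
  ring

theorem besselI_add_one_div_besselI {ν z : ℝ} (hν : 0 ≤ ν) (hz : 0 < z) :
    besselI (ν + 1) z / besselI ν z =
      z / 2 * besselSeries (ν + 1) ((z / 2) ^ 2) / besselSeries ν ((z / 2) ^ 2) := by
  have hG := (besselSeries_pos hν (by positivity : 0 ≤ (z / 2) ^ 2)).ne'
  have hpow : (z / 2) ^ ν ≠ 0 := (rpow_pos_of_pos (by positivity) ν).ne'
  rw [besselI_eq_rpow_mul_besselSeries _ hz, besselI_eq_rpow_mul_besselSeries _ hz,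
    rpow_add_one (by positivity)]
  field_simp

theorem vMF_log_normalizer_deriv (d : ℝ) (hd : 2 ≤ d) (κ : ℝ) (hκ : 0 < κ) :
    HasDerivAt (fun t : ℝ => (d/2 - 1) * Real.log t - Real.log (besselI (d/2 - 1) t))
      (-(besselI (d/2) κ / besselI (d/2 - 1) κ)) κ := by
  set ν := d / 2 - 1
  have hν : 0 ≤ ν := by simp only [ν]; linarith
  have hsq : HasDerivAt (fun t : ℝ => (t / 2) ^ 2) (κ / 2) κ :=
    (((hasDerivAt_id' κ).div_const 2).fun_pow 2).congr_deriv (by norm_num; ring)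
  have hG := (hasDerivAt_besselSeries hν ((κ / 2) ^ 2)).comp κ hsq
  have hf := (hasDerivAt_const κ (ν * log 2)).sub
    (hG.log (besselSeries_pos hν (by positivity)).ne')
  have hf_eq : (fun t => ν * log t - log (besselI ν t)) =ᶠ[𝓝 κ]
      fun t => ν * log 2 - log (besselSeries ν ((t / 2) ^ 2)) := by
    filter_upwards [eventually_gt_nhds hκ] with t ht using mul_log_sub_log_besselI hν ht
  refine (hf.congr_of_eventuallyEq hf_eq).congr_deriv ?_
  rw [show d / 2 = ν + 1 by ring, besselI_add_one_div_besselI hν hκ, Function.comp_apply]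
  ring
end

section
/- Let α_q, β_q, α_p, β_p > 0 and let q be the Gamma distribution with shape α_q and rate β_q and p the Gamma distribution with shape α_p and rate β_p. Then the Kullback–Leibler divergence D_KL(q ‖ p) equals (α_q − α_p)·ψ(α_q) − log(Γ(α_q)) + log(Γ(α_p)) + α_p·(log(β_q) − log(β_p)) + α_q·(β_p − β_q)/β_q, where ψ = Γ'/Γ is the digamma function. -/
open MeasureTheory ProbabilityTheory

/-- The Kullback–Leibler divergence `D_KL(q ‖ p) = ∫ log(dq/dp) dq` of `q` from `p`
(meaningful when `q` is absolutely continuous with respect to `p`). -/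
noncomputable def klDivergence (q p : Measure ℝ) : ℝ :=
  ∫ x, Real.log ((q.rnDeriv p) x).toReal ∂q

/-- The digamma function `ψ = Γ'/Γ`. -/
noncomputable def digamma (x : ℝ) : ℝ := deriv Real.Gamma x / Real.Gamma x

/-! On `(0, ∞)` both Gamma densities are positive, so the log-likelihood ratio is the affine
function `c + (αq - αp) log x + (βp - βq) x` of `log x` and `x`. The divergence is therefore
determined by the moments `E[log X] = ψ(αq) - log βq` and `E[X] = αq / βq` of
`X ~ Γ(αq, βq)`. The logarithmic moment is `Γ'(a) = ∫ t^(a-1) log t e^(-t) dt`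
(differentiation under the integral sign), rescaled by `t = βq x`. -/

open Real Set

lemma abs_log_le_rpow_add_rpow_neg {x ε : ℝ} (hx : 0 < x) (hε : 0 < ε) :
    |log x| ≤ (x ^ ε + x ^ (-ε)) / ε := by
  have hpos : log x ≤ x ^ ε / ε := log_le_rpow_div hx.le hε
  have hneg : -log x ≤ x ^ (-ε) / ε := by
    simpa [log_inv, inv_rpow hx.le, rpow_neg hx.le] using log_le_rpow_div (inv_pos.2 hx).le hε
  rw [add_div, abs_le]
  constructor <;> linarith [div_nonneg (rpow_pos_of_pos hx ε).le hε.le,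
    div_nonneg (rpow_pos_of_pos hx (-ε)).le hε.le]

lemma integrableOn_rpow_mul_exp_neg_mul {a r : ℝ} (ha : 0 < a) (hr : 0 < r) :
    IntegrableOn (fun x : ℝ => x ^ (a - 1) * exp (-(r * x))) (Ioi 0) := by
  simpa using integrableOn_rpow_mul_exp_neg_mul_rpow (p := 1) (by linarith) zero_lt_one hr

lemma integrableOn_rpow_mul_log_mul_exp_neg_mul {a r : ℝ} (ha : 0 < a) (hr : 0 < r) :
    IntegrableOn (fun x : ℝ => x ^ (a - 1) * log x * exp (-(r * x))) (Ioi 0) := by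
  obtain ⟨ε, hε, hεa⟩ : ∃ ε, 0 < ε ∧ ε < a := ⟨a / 2, half_pos ha, half_lt_self ha⟩
  have hbound := ((integrableOn_rpow_mul_exp_neg_mul (a := a + ε) (by linarith) hr).add
    (integrableOn_rpow_mul_exp_neg_mul (a := a - ε) (by linarith) hr)).div_const ε
  refine hbound.mono' (by fun_prop) ((ae_restrict_iff' measurableSet_Ioi).2 <| ae_of_all _ ?_)
  intro x (hx : 0 < x)
  have hxa : 0 < x ^ (a - 1) := rpow_pos_of_pos hx _
  calc ‖x ^ (a - 1) * log x * exp (-(r * x))‖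
      = x ^ (a - 1) * |log x| * exp (-(r * x)) := by
        rw [norm_mul, norm_mul, norm_of_nonneg hxa.le, norm_of_nonneg (exp_pos _).le,
          Real.norm_eq_abs]
    _ ≤ x ^ (a - 1) * ((x ^ ε + x ^ (-ε)) / ε) * exp (-(r * x)) := by
        gcongr; exact abs_log_le_rpow_add_rpow_neg hx hε
    _ = (x ^ (a + ε - 1) * exp (-(r * x)) + x ^ (a - ε - 1) * exp (-(r * x))) / ε := by
        rw [show a + ε - 1 = a - 1 + ε by ring, show a - ε - 1 = a - 1 + -ε by ring,
          rpow_add hx, rpow_add hx]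
        ring

lemma hasDerivAt_Gamma_integral {a : ℝ} (ha : 0 < a) :
    HasDerivAt Gamma (∫ t in Ioi (0 : ℝ), t ^ (a - 1) * log t * exp (-t)) a := by
  have hre : 0 < (a : ℂ).re := by simpa using ha
  have hGamma : Complex.GammaIntegral =ᶠ[nhds (a : ℂ)] Complex.Gamma := by
    filter_upwards [(isOpen_lt continuous_const Complex.continuous_re).mem_nhds hre]
      with z hz using (Complex.Gamma_eq_integral hz).symm
  have hint : ((∫ t in Ioi (0 : ℝ), t ^ (a - 1) * log t * exp (-t) : ℝ) : ℂ)
      = ∫ t in Ioi (0 : ℝ), (t : ℂ) ^ ((a : ℂ) - 1) * (log t * exp (-t)) := by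
    refine integral_complex_ofReal.symm.trans <|
      setIntegral_congr_fun measurableSet_Ioi fun t ht => ?_
    rw [Complex.ofReal_mul, Complex.ofReal_mul, Complex.ofReal_cpow (le_of_lt ht)]
    push_cast
    ring
  have hC := (Complex.hasDerivAt_GammaIntegral hre).congr_of_eventuallyEq hGamma.symm
  rw [← hint] at hC
  simpa [Complex.Gamma_ofReal] using hC.real_of_complex

lemma integral_rpow_mul_log_mul_exp_neg_mul_Ioi {a r : ℝ} (ha : 0 < a) (hr : 0 < r) :
    ∫ x in Ioi (0 : ℝ), x ^ (a - 1) * log x * exp (-(r * x))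
      = (1 / r) ^ a * (deriv Gamma a - log r * Gamma a) := by
  have hsubst := integral_comp_mul_left_Ioi
    (fun u => (u / r) ^ (a - 1) * log (u / r) * exp (-u)) 0 hr
  simp only [mul_div_cancel_left₀ _ hr.ne', mul_zero, smul_eq_mul] at hsubst
  have hsplit : ∫ u in Ioi (0 : ℝ), (u / r) ^ (a - 1) * log (u / r) * exp (-u)
      = (r ^ (a - 1))⁻¹ * (∫ u in Ioi (0 : ℝ), u ^ (a - 1) * log u * exp (-u))
        - (r ^ (a - 1))⁻¹ * log r * ∫ u in Ioi (0 : ℝ), u ^ (a - 1) * exp (-u) := by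
    have h1 := integrableOn_rpow_mul_log_mul_exp_neg_mul ha one_pos
    have h0 := integrableOn_rpow_mul_exp_neg_mul ha one_pos
    simp only [one_mul] at h1 h0
    rw [← integral_const_mul, ← integral_const_mul,
      ← integral_sub (h1.const_mul _) (h0.const_mul _)]
    refine setIntegral_congr_fun measurableSet_Ioi fun u (hu : 0 < u) => ?_
    rw [div_rpow hu.le hr.le, log_div hu.ne' hr.ne']
    ring
  have hGamma : ∫ u in Ioi (0 : ℝ), u ^ (a - 1) * exp (-u) = Gamma a := by
    simpa using integral_rpow_mul_exp_neg_mul_Ioi ha one_pos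
  have hpow : (1 / r) ^ a = r⁻¹ * (r ^ (a - 1))⁻¹ := by
    rw [one_div, inv_rpow hr.le, ← mul_inv, ← rpow_one_add' hr.le (by linarith)]
    ring_nf
  rw [hsubst, hsplit, hGamma, (hasDerivAt_Gamma_integral ha).deriv, hpow]
  ring

section GammaMeasure

variable {a r : ℝ}

lemma measurable_gammaPDF (a r : ℝ) : Measurable (gammaPDF a r) :=
  (measurable_gammaPDFReal a r).ennreal_ofReal

lemma ae_pos_gammaMeasure (a r : ℝ) : ∀ᵐ x ∂gammaMeasure a r, 0 < x := by
  rw [gammaMeasure, ae_withDensity_iff (measurable_gammaPDF a r)]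
  filter_upwards [Measure.ae_ne volume 0] with x hx0 hpdf
  exact hx0.symm.lt_of_le (not_lt.1 fun hx => hpdf (gammaPDF_of_neg hx))

lemma gammaPDFReal_mul_eqOn (a r : ℝ) (F : ℝ → ℝ) :
    EqOn (fun x => gammaPDFReal a r x * F x)
      (fun x => r ^ a / Gamma a * (x ^ (a - 1) * F x * exp (-(r * x)))) (Ioi 0) := by
  intro x (hx : 0 < x)
  simp only [gammaPDFReal, if_pos hx.le]
  ring

lemma log_gammaPDFReal {x : ℝ} (ha : 0 < a) (hr : 0 < r) (hx : 0 < x) :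
    log (gammaPDFReal a r x) = a * log r - log (Gamma a) + (a - 1) * log x - r * x := by
  have hΓ := Gamma_pos_of_pos ha
  rw [gammaPDFReal, if_pos hx.le, log_mul (by positivity) (exp_pos _).ne',
    log_mul (by positivity) (rpow_pos_of_pos hx _).ne', log_div (by positivity) hΓ.ne',
    log_rpow hr, log_rpow hx, log_exp]
  ring

lemma integral_gammaMeasure (ha : 0 < a) (hr : 0 < r) (F : ℝ → ℝ) :
    ∫ x, F x ∂gammaMeasure a r = ∫ x in Ioi 0, gammaPDFReal a r x * F x := by
  have hpdf (x : ℝ) : (gammaPDF a r x).toReal = gammaPDFReal a r x :=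
    ENNReal.toReal_ofReal (gammaPDFReal_nonneg ha hr x)
  calc ∫ x, F x ∂gammaMeasure a r = ∫ x, gammaPDFReal a r x * F x := by
        rw [gammaMeasure, integral_withDensity_eq_integral_toReal_smul
          (measurable_gammaPDF a r) (ae_of_all _ fun _ => ENNReal.ofReal_lt_top)]
        simp only [hpdf, smul_eq_mul]
    _ = ∫ x in Ici 0, gammaPDFReal a r x * F x :=
        (setIntegral_eq_integral_of_forall_compl_eq_zero fun x (hx : ¬ 0 ≤ x) => by
          simp [gammaPDFReal, hx]).symm
    _ = ∫ x in Ioi 0, gammaPDFReal a r x * F x := integral_Ici_eq_integral_Ioi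

lemma integrable_gammaMeasure_iff (ha : 0 < a) (hr : 0 < r) {F : ℝ → ℝ} :
    Integrable F (gammaMeasure a r) ↔
      IntegrableOn (fun x => gammaPDFReal a r x * F x) (Ioi 0) := by
  have hsupp : Function.support (fun x => gammaPDFReal a r x * F x) ⊆ Ici 0 := fun x hx => by
    by_contra h
    simp [gammaPDFReal, show ¬ 0 ≤ x from h] at hx
  rw [gammaMeasure, integrable_withDensity_iff (measurable_gammaPDF a r)
    (ae_of_all _ fun _ => ENNReal.ofReal_lt_top), ← integrableOn_Ici_iff_integrableOn_Ioi,
    integrableOn_iff_integrable_of_support_subset hsupp]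
  simp only [gammaPDF, ENNReal.toReal_ofReal (gammaPDFReal_nonneg ha hr _), mul_comm]

lemma integrable_log_gammaMeasure (ha : 0 < a) (hr : 0 < r) :
    Integrable log (gammaMeasure a r) :=
  (integrable_gammaMeasure_iff ha hr).2 <|
    IntegrableOn.congr_fun ((integrableOn_rpow_mul_log_mul_exp_neg_mul ha hr).const_mul _)
      (gammaPDFReal_mul_eqOn a r log).symm measurableSet_Ioi

lemma integral_log_gammaMeasure (ha : 0 < a) (hr : 0 < r) :
    ∫ x, log x ∂gammaMeasure a r = digamma a - log r := by
  rw [integral_gammaMeasure ha hr, setIntegral_congr_fun measurableSet_Ioi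
    (gammaPDFReal_mul_eqOn a r log), integral_const_mul,
    integral_rpow_mul_log_mul_exp_neg_mul_Ioi ha hr, digamma,
    div_rpow zero_le_one hr.le, one_rpow]
  have := Gamma_pos_of_pos ha
  have := rpow_pos_of_pos hr a
  field_simp

lemma gammaPDFReal_mul_self_eqOn (a r : ℝ) :
    EqOn (fun x => gammaPDFReal a r x * x)
      (fun x => r ^ a / Gamma a * (x ^ (a + 1 - 1) * exp (-(r * x)))) (Ioi 0) := by
  intro x (hx : 0 < x)
  simp only [gammaPDFReal, if_pos hx.le]
  rw [add_sub_right_comm, rpow_add_one hx.ne']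
  ring

lemma integrable_id_gammaMeasure (ha : 0 < a) (hr : 0 < r) :
    Integrable (fun x => x) (gammaMeasure a r) :=
  (integrable_gammaMeasure_iff ha hr).2 <|
    IntegrableOn.congr_fun ((integrableOn_rpow_mul_exp_neg_mul (by linarith) hr).const_mul _)
      (gammaPDFReal_mul_self_eqOn a r).symm measurableSet_Ioi

lemma integral_id_gammaMeasure (ha : 0 < a) (hr : 0 < r) :
    ∫ x, x ∂gammaMeasure a r = a / r := by
  rw [integral_gammaMeasure ha hr, setIntegral_congr_fun measurableSet_Ioi
    (gammaPDFReal_mul_self_eqOn a r), integral_const_mul,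
    integral_rpow_mul_exp_neg_mul_Ioi (by linarith) hr, Gamma_add_one ha.ne',
    div_rpow zero_le_one hr.le, one_rpow, rpow_add_one hr.ne']
  have := Gamma_pos_of_pos ha
  have := rpow_pos_of_pos hr a
  field_simp

lemma integral_add_mul_log_add_mul_gammaMeasure (ha : 0 < a) (hr : 0 < r) (c u v : ℝ) :
    ∫ x, c + u * log x + v * x ∂gammaMeasure a r
      = c + u * (digamma a - log r) + v * (a / r) := by
  have := isProbabilityMeasure_gammaMeasure ha hr
  have hlog := (integrable_log_gammaMeasure ha hr).const_mul u
  have hid := (integrable_id_gammaMeasure ha hr).const_mul v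
  rw [integral_add (f := fun x => c + u * log x) ((integrable_const c).add hlog) hid,
    integral_add (integrable_const c) hlog,
    integral_const, integral_const_mul, integral_const_mul, integral_log_gammaMeasure ha hr,
    integral_id_gammaMeasure ha hr]
  simp only [probReal_univ, smul_eq_mul, one_mul]

end GammaMeasure

section KL

variable {αq βq αp βp : ℝ}

lemma gammaMeasure_eq_withDensity_div (hαp : 0 < αp) (hβp : 0 < βp) :
    gammaMeasure αq βq =
      (gammaMeasure αp βp).withDensity (gammaPDF αq βq / gammaPDF αp βp) := by
  rw [gammaMeasure, gammaMeasure, ← withDensity_mul _ (measurable_gammaPDF αp βp)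
    ((measurable_gammaPDF αq βq).div (measurable_gammaPDF αp βp))]
  refine withDensity_congr_ae ?_
  filter_upwards [Measure.ae_ne volume 0] with x hx0
  rcases hx0.lt_or_gt with hx | hx
  · simp [gammaPDF_of_neg hx]
  · have hp : gammaPDF αp βp x ≠ 0 :=
      ENNReal.ofReal_pos.2 (gammaPDFReal_pos hαp hβp hx) |>.ne'
    exact (ENNReal.mul_div_cancel hp ENNReal.ofReal_ne_top).symm

lemma llr_gammaMeasure (hαq : 0 < αq) (hβq : 0 < βq) (hαp : 0 < αp) (hβp : 0 < βp) :
    llr (gammaMeasure αq βq) (gammaMeasure αp βp) =ᵐ[gammaMeasure αq βq]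
      fun x => log (gammaPDFReal αq βq x) - log (gammaPDFReal αp βp x) := by
  have := isProbabilityMeasure_gammaMeasure hαp hβp
  have hdens := gammaMeasure_eq_withDensity_div (αq := αq) (βq := βq) hαp hβp
  have hrn := Measure.rnDeriv_withDensity (gammaMeasure αp βp)
    ((measurable_gammaPDF αq βq).div (measurable_gammaPDF αp βp))
  rw [← hdens] at hrn
  have hac : gammaMeasure αq βq ≪ gammaMeasure αp βp :=
    hdens ▸ withDensity_absolutelyContinuous _ _
  filter_upwards [hac.ae_le hrn, ae_pos_gammaMeasure αq βq] with x hx hpos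
  have hq := gammaPDFReal_pos hαq hβq hpos
  have hp := gammaPDFReal_pos hαp hβp hpos
  rw [llr, hx, Pi.div_apply, ENNReal.toReal_div, gammaPDF, gammaPDF,
    ENNReal.toReal_ofReal hq.le, ENNReal.toReal_ofReal hp.le, log_div hq.ne' hp.ne']

end KL

theorem kl_gamma_gamma (αq βq αp βp : ℝ)
    (hαq : 0 < αq) (hβq : 0 < βq) (hαp : 0 < αp) (hβp : 0 < βp) :
    klDivergence (gammaMeasure αq βq) (gammaMeasure αp βp) =
      (αq - αp) * digamma αq - Real.log (Real.Gamma αq) + Real.log (Real.Gamma αp)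
        + αp * (Real.log βq - Real.log βp) + αq * (βp - βq) / βq := by
  have hllr : llr (gammaMeasure αq βq) (gammaMeasure αp βp) =ᵐ[gammaMeasure αq βq]
      fun x => (αq * log βq - log (Gamma αq) - (αp * log βp - log (Gamma αp)))
        + (αq - αp) * log x + (βp - βq) * x := by
    filter_upwards [llr_gammaMeasure hαq hβq hαp hβp, ae_pos_gammaMeasure αq βq] with x hx hpos
    rw [hx, log_gammaPDFReal hαq hβq hpos, log_gammaPDFReal hαp hβp hpos]
    ring
  change ∫ x, llr _ _ x ∂_ = _
  rw [integral_congr_ae hllr, integral_add_mul_log_add_mul_gammaMeasure hαq hβq]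
  field_simp
  ring
end
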